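/- arXiv:1906.06994 — 6 statements merged into one kernel-verified Lean document; each statement's English description precedes it below -/
import Mathlib

section
/- Let S = {s_k : k ∈ ℤ} ⊂ ℝ be an infinite discrete set with s_k − s_{k−1} > 0 for all k, such that the family of gaps {s_k − s_{k−1} : k ∈ ℤ} is linearly independent over ℚ. Then S is self-avoiding: for every finite collection of pairwise distinct pairs (ω_1, θ_1), …, (ω_m, θ_m) ∈ (2ℤ+1) × ℝ, there exist an index j* and a real number t* such that t* ∈ (S − θ_{j*})/ω_{j*} but t* ∉ (S − θ_j)/ω_j for all j ≠ j*. -/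
/-- A set `S ⊆ ℝ` is self-avoiding if for every finite collection of pairwise distinct pairs
`(ω_j, θ_j)` of an odd integer and a real number, there are `j*` and `t* ∈ ℝ` with
`t* ∈ (S − θ_{j*})/ω_{j*}` but `t* ∉ (S − θ_j)/ω_j` for all `j ≠ j*`. -/
def SelfAvoiding (S : Set ℝ) : Prop :=
  ∀ (m : ℕ) (ω : Fin m → ℤ) (θ : Fin m → ℝ),
    0 < m → (∀ j, Odd (ω j)) →
    Function.Injective (fun j => (ω j, θ j)) →
    ∃ j : Fin m, ∃ t : ℝ,
      (∃ s ∈ S, t = (s - θ j) / (ω j : ℝ)) ∧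
      ∀ j' : Fin m, j' ≠ j → ¬ ∃ s ∈ S, t = (s - θ j') / (ω j' : ℝ)

namespace SelfAvoidingAux

/-- signed indicator of the interval between `q` and `p`. -/
noncomputable def chi (p q k : ℤ) : ℚ :=
  (if k ∈ Finset.Ioc q p then 1 else 0) - (if k ∈ Finset.Ioc p q then 1 else 0)

lemma chi_zero {p q k : ℤ} (h1 : k ∉ Finset.Ioc q p) (h2 : k ∉ Finset.Ioc p q) :
    chi p q k = 0 := by simp [chi, h1, h2]

lemma tele (s : ℤ → ℝ) (q : ℤ) : ∀ p, q ≤ p →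
    ∑ k ∈ Finset.Ioc q p, (s k - s (k - 1)) = s p - s q := by
  refine Int.le_induction ?_ ?_
  · simp
  · intro p hp ih
    have hins : Finset.Ioc q (p + 1) = insert (p + 1) (Finset.Ioc q p) := by
      ext x; simp only [Finset.mem_Ioc, Finset.mem_insert]; omega
    rw [hins, Finset.sum_insert (by simp [Finset.mem_Ioc])]
    have h11 : p + 1 - 1 = p := by ring
    rw [h11, ih]; ring

lemma sum_chi (s : ℤ → ℝ) (p q : ℤ) (T : Finset ℤ)
    (h1 : Finset.Ioc q p ⊆ T) (h2 : Finset.Ioc p q ⊆ T) :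
    ∑ k ∈ T, chi p q k • (s k - s (k - 1)) = s p - s q := by
  have expand : ∀ k ∈ T, chi p q k • (s k - s (k - 1)) =
      (if k ∈ Finset.Ioc q p then (s k - s (k - 1)) else 0)
      - (if k ∈ Finset.Ioc p q then (s k - s (k - 1)) else 0) := by
    intro k _
    simp only [chi, sub_smul]
    split <;> split <;> simp
  rw [Finset.sum_congr rfl expand, Finset.sum_sub_distrib,
      Finset.sum_ite_mem, Finset.sum_ite_mem,
      Finset.inter_eq_right.mpr h1, Finset.inter_eq_right.mpr h2]
  rcases le_total q p with h | h
  · rw [tele s q p h, Finset.Ioc_eq_empty (by omega), Finset.sum_empty, sub_zero]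
  · rw [tele s p q h, Finset.Ioc_eq_empty (by omega), Finset.sum_empty, zero_sub]
    ring

lemma key_aux (s : ℤ → ℝ)
    (hindep : LinearIndependent ℚ (fun k : ℤ => s k - s (k - 1)))
    (a b : ℤ) (ha : a ≠ 0) (hb : b ≠ 0) (p q p' q' : ℤ) (hqp : q < p)
    (h : (a : ℝ) * (s p - s q) = (b : ℝ) * (s p' - s q')) :
    (a = b ∧ p = p' ∧ q = q') ∨ (a = -b ∧ p = q' ∧ q = p') := by
  classical
  set T : Finset ℤ :=
    (Finset.Ioc q p ∪ Finset.Ioc p q) ∪ (Finset.Ioc q' p' ∪ Finset.Ioc p' q') with hT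
  set F : ℤ → ℚ := fun k => (a : ℚ) * chi p q k - (b : ℚ) * chi p' q' k with hFdef
  have hsupp : ∀ k, F k ≠ 0 → k ∈ T := by
    intro k hk
    by_contra hkT
    simp only [hT, Finset.mem_union, not_or] at hkT
    obtain ⟨⟨hk1, hk2⟩, hk3, hk4⟩ := hkT
    exact hk (by simp [hFdef, chi_zero hk1 hk2, chi_zero hk3 hk4])
  set l : ℤ →₀ ℚ := Finsupp.onFinset T F hsupp with hl
  have hcomb : Finsupp.linearCombination ℚ (fun k : ℤ => s k - s (k - 1)) l = 0 := by
    rw [hl, Finsupp.linearCombination_apply,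
        Finsupp.onFinset_sum hsupp (fun a => zero_smul ℚ (s a - s (a - 1)))]
    have hsplit : ∀ k ∈ T, F k • (s k - s (k - 1)) =
        (a : ℚ) • (chi p q k • (s k - s (k - 1)))
        - (b : ℚ) • (chi p' q' k • (s k - s (k - 1))) := by
      intro k _
      rw [hFdef]
      simp only [sub_smul, smul_smul]
    rw [Finset.sum_congr rfl hsplit, Finset.sum_sub_distrib, ← Finset.smul_sum,
        ← Finset.smul_sum,
        sum_chi s p q T (by intro x hx; simp [hT, hx]) (by intro x hx; simp [hT, hx]),
        sum_chi s p' q' T (by intro x hx; simp [hT, hx]) (by intro x hx; simp [hT, hx])]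
    rw [Rat.smul_def, Rat.smul_def]
    push_cast
    linarith [h]
  have hl0 : l = 0 := linearIndependent_iff.mp hindep l hcomb
  have hFk : ∀ k, (a : ℚ) * chi p q k = (b : ℚ) * chi p' q' k := by
    intro k
    have h0 : (a : ℚ) * chi p q k - (b : ℚ) * chi p' q' k = 0 := by
      have h1 : l k = 0 := by rw [hl0]; rfl
      exact h1
    linarith [h0]
  have haQ : (a : ℚ) ≠ 0 := Int.cast_ne_zero.mpr ha
  have hbQ : (b : ℚ) ≠ 0 := Int.cast_ne_zero.mpr hb
  have hchi1 : ∀ k, chi p q k = if q < k ∧ k ≤ p then 1 else 0 := by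
    intro k
    have : ¬ (p < k ∧ k ≤ q) := by omega
    simp [chi, Finset.mem_Ioc, this]
  have hp'q' : p' ≠ q' := by
    intro e
    have h0 := hFk p
    rw [hchi1 p, if_pos ⟨hqp, le_refl p⟩, e] at h0
    have : chi q' q' p = 0 := by simp [chi, Finset.mem_Ioc]
    rw [this, mul_zero, mul_one] at h0
    exact haQ h0
  rcases lt_or_gt_of_ne hp'q' with hlt | hlt
  · -- p' < q' : reversed interval, a = -b
    right
    have hchi2 : ∀ k, chi p' q' k = -(if p' < k ∧ k ≤ q' then 1 else 0) := by
      intro k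
      have : ¬ (q' < k ∧ k ≤ p') := by omega
      simp [chi, Finset.mem_Ioc, this]
    have hiff : ∀ k, (q < k ∧ k ≤ p) ↔ (p' < k ∧ k ≤ q') := by
      intro k
      have h0 := hFk k
      rw [hchi1 k, hchi2 k] at h0
      constructor
      · intro hk
        by_contra hk'
        rw [if_pos hk, if_neg hk'] at h0
        simp only [mul_one, mul_zero, mul_neg, neg_zero] at h0
        exact haQ (by linarith)
      · intro hk
        by_contra hk'
        rw [if_neg hk', if_pos hk] at h0
        simp only [mul_one, mul_zero, mul_neg, neg_zero] at h0
        exact hbQ (by linarith)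
    have e1 := (hiff p).mp ⟨hqp, le_refl p⟩
    have e2 := (hiff q').mpr ⟨hlt, le_refl q'⟩
    have e3 := (hiff (q + 1)).mp ⟨by omega, by omega⟩
    have e4 := (hiff (p' + 1)).mpr ⟨by omega, by omega⟩
    have hpq' : p = q' := by omega
    have hqp' : q = p' := by omega
    refine ⟨?_, hpq', hqp'⟩
    have h0 := hFk p
    rw [hchi1 p, if_pos ⟨hqp, le_refl p⟩, hchi2 p, if_pos ((hiff p).mp ⟨hqp, le_refl p⟩)] at h0
    have : (a : ℚ) = -(b : ℚ) := by linarith [h0]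
    exact_mod_cast this
  · -- q' < p' : same orientation, a = b
    left
    have hchi2 : ∀ k, chi p' q' k = if q' < k ∧ k ≤ p' then 1 else 0 := by
      intro k
      have : ¬ (p' < k ∧ k ≤ q') := by omega
      simp [chi, Finset.mem_Ioc, this]
    have hiff : ∀ k, (q < k ∧ k ≤ p) ↔ (q' < k ∧ k ≤ p') := by
      intro k
      have h0 := hFk k
      rw [hchi1 k, hchi2 k] at h0
      constructor
      · intro hk
        by_contra hk'
        rw [if_pos hk, if_neg hk'] at h0
        simp only [mul_one, mul_zero, mul_neg, neg_zero] at h0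
        exact haQ (by linarith)
      · intro hk
        by_contra hk'
        rw [if_neg hk', if_pos hk] at h0
        simp only [mul_one, mul_zero, mul_neg, neg_zero] at h0
        exact hbQ (by linarith)
    have e1 := (hiff p).mp ⟨hqp, le_refl p⟩
    have e2 := (hiff p').mpr ⟨hlt, le_refl p'⟩
    have e3 := (hiff (q + 1)).mp ⟨by omega, by omega⟩
    have e4 := (hiff (q' + 1)).mpr ⟨by omega, by omega⟩
    have hpp : p = p' := by omega
    have hqq : q = q' := by omega
    refine ⟨?_, hpp, hqq⟩
    have h0 := hFk p
    rw [hchi1 p, if_pos ⟨hqp, le_refl p⟩, hchi2 p, if_pos ((hiff p).mp ⟨hqp, le_refl p⟩)] at h0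
    have : (a : ℚ) = (b : ℚ) := by linarith [h0]
    exact_mod_cast this

lemma key (s : ℤ → ℝ)
    (hindep : LinearIndependent ℚ (fun k : ℤ => s k - s (k - 1)))
    (a b : ℤ) (ha : a ≠ 0) (hb : b ≠ 0) (p q p' q' : ℤ) (hpq : p ≠ q)
    (h : (a : ℝ) * (s p - s q) = (b : ℝ) * (s p' - s q')) :
    (a = b ∧ p = p' ∧ q = q') ∨ (a = -b ∧ p = q' ∧ q = p') := by
  rcases lt_or_gt_of_ne hpq with h1 | h1
  · have h' : ((-a : ℤ) : ℝ) * (s q - s p) = (b : ℝ) * (s p' - s q') := by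
      push_cast
      linarith [h]
    rcases key_aux s hindep (-a) b (neg_ne_zero.mpr ha) hb q p p' q' h1 h' with
      ⟨h2, h3, h4⟩ | ⟨h2, h3, h4⟩
    · exact Or.inr ⟨by omega, h4, h3⟩
    · exact Or.inl ⟨by omega, h4, h3⟩
  · exact key_aux s hindep a b ha hb p q p' q' h1 h

end SelfAvoidingAux

/-- If `S = {s k : k ∈ ℤ}` is an infinite discrete set with positive gaps `s k − s (k−1)`
that are rationally independent, then `S` is self-avoiding. -/
theorem selfAvoiding_of_rationallyIndependent_gaps (s : ℤ → ℝ)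
    (hmono : ∀ k : ℤ, s (k - 1) < s k)
    (hdisc : ∀ x ∈ Set.range s, ∃ ε > 0, ∀ y ∈ Set.range s, |y - x| < ε → y = x)
    (hindep : LinearIndependent ℚ (fun k : ℤ => s k - s (k - 1))) :
    SelfAvoiding (Set.range s) := by
  intro m ω θ hm hodd hinj
  by_contra hcon
  push_neg at hcon
  set j0 : Fin m := ⟨0, hm⟩ with hj0
  have hωZ : ∀ j, ω j ≠ 0 := by
    intro j h0
    obtain ⟨c, hc⟩ := hodd j
    omega
  have hωR : ∀ j, (ω j : ℝ) ≠ 0 := fun j => Int.cast_ne_zero.mpr (hωZ j)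
  have H : ∀ k : ℤ, ∃ j' : Fin m, j' ≠ j0 ∧ ∃ k' : ℤ,
      (ω j' : ℝ) * (s k - θ j0) = (ω j0 : ℝ) * (s k' - θ j') := by
    intro k
    obtain ⟨j', hne, x, ⟨k', rfl⟩, hx⟩ :=
      hcon j0 ((s k - θ j0) / (ω j0 : ℝ)) ⟨s k, ⟨k, rfl⟩, rfl⟩
    refine ⟨j', hne, k', ?_⟩
    rw [div_eq_div_iff (hωR j0) (hωR j')] at hx
    linarith [hx]
  choose J hJne K hK using H
  obtain ⟨j₁, hj₁⟩ := Finite.exists_infinite_fiber J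
  haveI := hj₁
  let e := Infinite.natEmbedding (J ⁻¹' {j₁} : Set ℤ)
  have hmem : ∀ n : ℕ, J ((e n : (J ⁻¹' {j₁} : Set ℤ)) : ℤ) = j₁ := fun n => (e n).2
  set k1 : ℤ := ((e 0 : (J ⁻¹' {j₁} : Set ℤ)) : ℤ) with hk1
  set k2 : ℤ := ((e 1 : (J ⁻¹' {j₁} : Set ℤ)) : ℤ) with hk2
  set k3 : ℤ := ((e 2 : (J ⁻¹' {j₁} : Set ℤ)) : ℤ) with hk3
  have hne12 : k1 ≠ k2 := fun h => by
    have := e.injective (Subtype.ext h)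
    norm_num at this
  have hne13 : k1 ≠ k3 := fun h => by
    have := e.injective (Subtype.ext h)
    norm_num at this
  have hne23 : k2 ≠ k3 := fun h => by
    have := e.injective (Subtype.ext h)
    norm_num at this
  have hJ1 : J k1 = j₁ := hmem 0
  have hJ2 : J k2 = j₁ := hmem 1
  have hJ3 : J k3 = j₁ := hmem 2
  have hj₁ne : j₁ ≠ j0 := hJ1 ▸ hJne k1
  have hrel : ∀ k, J k = j₁ →
      (ω j₁ : ℝ) * s k - (ω j0 : ℝ) * s (K k) = (ω j₁ : ℝ) * θ j0 - (ω j0 : ℝ) * θ j₁ := by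
    intro k hk
    have h0 := hK k
    rw [hk] at h0
    linear_combination h0
  have hsub : ∀ k k', J k = j₁ → J k' = j₁ →
      (ω j₁ : ℝ) * (s k - s k') = (ω j0 : ℝ) * (s (K k) - s (K k')) := by
    intro k k' hk hk'
    linear_combination hrel k hk - hrel k' hk'
  have caseA : ω j₁ = ω j0 → ∀ k, J k = j₁ → K k = k → False := by
    intro hωeq k hk hKk
    have h0 := hrel k hk
    rw [hKk, hωeq] at h0
    have hθ : θ j0 = θ j₁ := by
      have hz : (ω j0 : ℝ) * (θ j0 - θ j₁) = 0 := by linarith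
      rcases mul_eq_zero.mp hz with hz | hz
      · exact absurd hz (hωR j0)
      · linarith
    have : j₁ = j0 := hinj (show (ω j₁, θ j₁) = (ω j0, θ j0) by rw [hωeq, hθ])
    exact hj₁ne this
  rcases SelfAvoidingAux.key s hindep (ω j₁) (ω j0) (hωZ j₁) (hωZ j0)
      k1 k2 (K k1) (K k2) hne12 (hsub k1 k2 hJ1 hJ2) with
    ⟨hab, h1, h2⟩ | ⟨hab, h1, h2⟩
  · exact caseA hab k1 hJ1 h1.symm
  rcases SelfAvoidingAux.key s hindep (ω j₁) (ω j0) (hωZ j₁) (hωZ j0)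
      k1 k3 (K k1) (K k3) hne13 (hsub k1 k3 hJ1 hJ3) with
    ⟨hab', h1', h2'⟩ | ⟨hab', h1', h2'⟩
  · exact caseA hab' k1 hJ1 h1'.symm
  · -- h2 : k2 = K k1, h2' : k3 = K k1
    exact hne23 (h2.trans h2'.symm)
end

section
/- Let F : U → ℂ be holomorphic on a connected open domain U ⊂ ℂ^k containing ℝ^k. Let a ∈ ℝ^k and δ > 0 be such that the open polydisc of radius δ centered at a is contained in U, and suppose F vanishes on the set T = {(a_1 + i z_1, …, a_k + i z_k) : z_j ∈ (−δ, δ) for all j}. Then F is identically zero on U. -/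
open Complex Filter Metric Set

/-- One-variable slice of a multivariable function is differentiable. -/
private lemma update_slice_diffAt {k : ℕ} {F : (Fin k → ℂ) → ℂ} {U : Set (Fin k → ℂ)}
    (hUopen : IsOpen U) (hF : DifferentiableOn ℂ F U) (w : Fin k → ℂ) (i : Fin k)
    (t : ℂ) (ht : Function.update w i t ∈ U) :
    DifferentiableAt ℂ (fun s : ℂ => F (Function.update w i s)) t := by
  have hupd : Differentiable ℂ (fun s : ℂ => Function.update w i s) := by
    apply differentiable_pi.mpr
    intro j
    rcases eq_or_ne j i with rfl | hj
    · simpa using differentiable_id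
    · simpa [Function.update_of_ne hj] using differentiable_const (w j)
  exact (hF.differentiableAt (hUopen.mem_nhds ht)).comp t (hupd t)

/-- Propagation: if `F` is holomorphic on `U`, the polydisc `P(c,r)` is inside `U`,
and `F` vanishes on a small polydisc `P(b,ε)` with `|b j - c j| + ε ≤ r`, then
`F` vanishes on all of `P(c,r)`. -/
private lemma poly_propagate {k : ℕ} {F : (Fin k → ℂ) → ℂ} {U : Set (Fin k → ℂ)}
    (hUopen : IsOpen U) (hF : DifferentiableOn ℂ F U) (c b : Fin k → ℂ) (r ε : ℝ)
    (hε : 0 < ε) (hsub : ∀ j, ‖b j - c j‖ + ε ≤ r)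
    (hP : {z : Fin k → ℂ | ∀ j, ‖z j - c j‖ < r} ⊆ U)
    (h0 : ∀ z : Fin k → ℂ, (∀ j, ‖z j - b j‖ < ε) → F z = 0) :
    ∀ z : Fin k → ℂ, (∀ j, ‖z j - c j‖ < r) → F z = 0 := by
  have key : ∀ m : ℕ, ∀ w : Fin k → ℂ,
      (∀ j : Fin k, (j : ℕ) < m → ‖w j - c j‖ < r) →
      (∀ j : Fin k, m ≤ (j : ℕ) → ‖w j - b j‖ < ε) → F w = 0 := by
    intro m
    induction m with
    | zero => exact fun w _ h2 => h0 w fun j => h2 j (Nat.zero_le _)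
    | succ m ih =>
      intro w hw1 hw2
      by_cases hm : m < k
      · set i : Fin k := ⟨m, hm⟩ with hi
        -- membership of slices in the big polydisc
        have hmem : ∀ t : ℂ, ‖t - c i‖ < r →
            (∀ j : Fin k, ‖Function.update w i t j - c j‖ < r) := by
          intro t ht j
          rcases eq_or_ne j i with rfl | hj
          · simpa [Function.update_self] using ht
          · rw [Function.update_of_ne hj]
            rcases lt_or_ge (j : ℕ) (m + 1) with h | h
            · have hjm : (j : ℕ) < m := by
                have : (j : ℕ) ≠ m := fun hc => hj (Fin.ext hc)
                omega
              exact hw1 j (by omega)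
            · have h1 : ‖w j - c j‖ ≤
                  ‖w j - b j‖ + ‖b j - c j‖ := by
                calc ‖w j - c j‖ = ‖(w j - b j) + (b j - c j)‖ := by
                      ring_nf
                  _ ≤ _ := norm_add_le _ _
              have h2 := hw2 j h
              have := hsub j
              linarith
        have hballU : ∀ t ∈ Metric.ball (c i) r, Function.update w i t ∈ U := by
          intro t ht
          exact hP (hmem t (by simpa [Complex.dist_eq] using ht))
        set g : ℂ → ℂ := fun t => F (Function.update w i t) with hg
        have hganal : AnalyticOnNhd ℂ g (Metric.ball (c i) r) := by
          apply DifferentiableOn.analyticOnNhd _ Metric.isOpen_ball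
          exact fun t ht =>
            (update_slice_diffAt hUopen hF w i t (hballU t ht)).differentiableWithinAt
        have hbc : ‖b i - c i‖ < r := by
          have := hsub i; linarith
        -- g vanishes on the small ball around b i
        have hgz : ∀ t : ℂ, ‖t - b i‖ < ε → g t = 0 := by
          intro t ht
          apply ih
          · intro j hj
            have hji : j ≠ i := fun hc => absurd hj (by simp [hc, hi])
            rw [Function.update_of_ne hji]
            exact hw1 j (by omega)
          · intro j hj
            rcases eq_or_ne j i with rfl | hj'
            · simpa [Function.update_self] using ht
            · rw [Function.update_of_ne hj']
              have : (j : ℕ) ≠ m := fun hc => hj' (Fin.ext hc)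
              exact hw2 j (by omega)
        have hfreq : ∃ᶠ t in nhdsWithin (b i) {(b i)}ᶜ, g t = 0 := by
          apply Filter.Eventually.frequently
          apply Filter.Eventually.filter_mono nhdsWithin_le_nhds
          have : Metric.ball (b i) ε ∈ nhds (b i) :=
            Metric.ball_mem_nhds _ hε
          filter_upwards [this] with t ht
          exact hgz t (by simpa [Complex.dist_eq] using ht)
        have hgzero : Set.EqOn g 0 (Metric.ball (c i) r) :=
          hganal.eqOn_zero_of_preconnected_of_frequently_eq_zero
            (convex_ball _ _).isPreconnected
            (by simpa [Complex.dist_eq] using hbc) hfreq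
        have hwi : w i ∈ Metric.ball (c i) r := by
          simpa [Complex.dist_eq] using hw1 i (by simp [hi])
        have := hgzero hwi
        simpa [hg, Function.update_eq_self] using this
      · apply ih w (fun j hj => hw1 j (by omega))
        exact fun j hj => absurd (hj.trans_lt j.isLt) hm
  intro z hzP
  exact key k z (fun j _ => hzP j) (fun j hj => absurd (hj.trans_lt j.isLt) (lt_irrefl k))

/-- If a function `F` holomorphic on a connected open set `U ⊆ ℂ^k` containing `ℝ^k` (and
containing the polydisc of radius `δ` around the real point `a`) vanishes on the
purely-imaginary-displacement cube `T = {a + i z : z ∈ (−δ,δ)^k}`, then `F ≡ 0` on `U`. -/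
theorem holomorphic_eq_zero_of_eq_zero_on_imaginary_cube (k : ℕ)
    (F : (Fin k → ℂ) → ℂ) (U : Set (Fin k → ℂ))
    (hUopen : IsOpen U) (hUconn : IsPreconnected U)
    (hUreal : ∀ x : Fin k → ℝ, (fun j => (x j : ℂ)) ∈ U)
    (hF : DifferentiableOn ℂ F U)
    (a : Fin k → ℝ) (δ : ℝ) (hδ : 0 < δ)
    (hpoly : {z : Fin k → ℂ | ∀ j, ‖z j - (a j : ℂ)‖ < δ} ⊆ U)
    (hT : ∀ y : Fin k → ℝ, (∀ j, |y j| < δ) →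
      F (fun j => (a j : ℂ) + Complex.I * (y j : ℂ)) = 0) :
    ∀ z ∈ U, F z = 0 := by
  -- Step 1: F = 0 on the polydisc around a, by iterated one-variable identity theorem.
  have key : ∀ m : ℕ, ∀ w : Fin k → ℂ, (∀ j, ‖w j - (a j : ℂ)‖ < δ) →
      (∀ j : Fin k, m ≤ (j : ℕ) → (w j).re = a j) → F w = 0 := by
    intro m
    induction m with
    | zero =>
      intro w hw hre
      have hw' : w = fun j => (a j : ℂ) + Complex.I * (((w j).im : ℝ) : ℂ) := by
        funext j
        apply Complex.ext <;> simp [hre j (Nat.zero_le _)]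
      rw [hw']
      apply hT
      intro j
      have h1 : |(w j - (a j : ℂ)).im| ≤ ‖w j - (a j : ℂ)‖ :=
        Complex.abs_im_le_norm _
      have h2 : (w j - (a j : ℂ)).im = (w j).im := by simp
      rw [h2] at h1
      exact h1.trans_lt (hw j)
    | succ m ih =>
      intro w hw hre
      by_cases hm : m < k
      · set i : Fin k := ⟨m, hm⟩ with hi
        set z₀ : ℂ := ((a i : ℝ) : ℂ) with hz₀
        have hmem : ∀ t : ℂ, ‖t - z₀‖ < δ →
            (∀ j : Fin k, ‖Function.update w i t j - (a j : ℂ)‖ < δ) := by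
          intro t ht j
          rcases eq_or_ne j i with rfl | hj
          · simpa [Function.update_self] using ht
          · rw [Function.update_of_ne hj]; exact hw j
        have hballU : ∀ t ∈ Metric.ball z₀ δ, Function.update w i t ∈ U := by
          intro t ht
          exact hpoly (hmem t (by simpa [Complex.dist_eq] using ht))
        set g : ℂ → ℂ := fun t => F (Function.update w i t) with hg
        have hganal : AnalyticOnNhd ℂ g (Metric.ball z₀ δ) := by
          apply DifferentiableOn.analyticOnNhd _ Metric.isOpen_ball
          exact fun t ht =>
            (update_slice_diffAt hUopen hF w i t (hballU t ht)).differentiableWithinAt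
        -- g vanishes on the imaginary segment
        have hgz : ∀ y : ℝ, |y| < δ → g (z₀ + Complex.I * (y : ℂ)) = 0 := by
          intro y hy
          apply ih
          · intro j
            rcases eq_or_ne j i with rfl | hj
            · rw [Function.update_self]
              have heq : z₀ + Complex.I * (y : ℂ) - ((a i : ℝ) : ℂ) = Complex.I * (y : ℂ) := by
                rw [hz₀]; ring
              rw [heq, norm_mul, Complex.norm_I, one_mul, Complex.norm_real, Real.norm_eq_abs]
              exact hy
            · rw [Function.update_of_ne hj]; exact hw j
          · intro j hj
            rcases eq_or_ne j i with rfl | hj'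
            · rw [Function.update_self]; simp [hz₀]
            · rw [Function.update_of_ne hj']
              have : (j : ℕ) ≠ m := fun hc => hj' (Fin.ext hc)
              exact hre j (by omega)
        have hfreq : ∃ᶠ t in nhdsWithin z₀ {z₀}ᶜ, g t = 0 := by
          have htend : Filter.Tendsto (fun n : ℕ => z₀ + Complex.I * ((δ / (n + 2) : ℝ) : ℂ))
              Filter.atTop (nhdsWithin z₀ {z₀}ᶜ) := by
            rw [tendsto_nhdsWithin_iff]
            constructor
            · have hR : Filter.Tendsto (fun n : ℕ => (δ / (n + 2) : ℝ))
                  Filter.atTop (nhds 0) := by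
                exact Filter.Tendsto.div_atTop tendsto_const_nhds
                  (Filter.tendsto_atTop_add_const_right _ 2 tendsto_natCast_atTop_atTop)
              have := ((Complex.continuous_ofReal.tendsto 0).comp hR).const_mul Complex.I
              have := this.const_add z₀
              simpa using this
            · apply Filter.Eventually.of_forall
              intro n
              simp only [Set.mem_compl_iff, Set.mem_singleton_iff]
              intro hcon
              have h1 := add_eq_left.mp hcon
              rw [mul_eq_zero] at h1
              rcases h1 with h | h
              · exact Complex.I_ne_zero h
              · rw [Complex.ofReal_eq_zero] at h
                have h2 : (δ / ((n : ℝ) + 2)) ≠ 0 := by positivity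
                exact h2 h
          apply htend.frequently
          apply Filter.Frequently.of_forall
          intro n
          apply hgz
          rw [abs_of_pos (by positivity)]
          rw [div_lt_iff₀ (by positivity)]
          nlinarith [hδ]
        have hgzero : Set.EqOn g 0 (Metric.ball z₀ δ) :=
          hganal.eqOn_zero_of_preconnected_of_frequently_eq_zero
            (convex_ball _ _).isPreconnected
            (by simpa [Complex.dist_eq] using hδ) hfreq
        have hwi : w i ∈ Metric.ball z₀ δ := by
          simpa [Complex.dist_eq] using hw i
        have := hgzero hwi
        simpa [hg, Function.update_eq_self] using this
      · exact ih w hw fun j hj => absurd (hj.trans_lt j.isLt) hm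
  have hPzero : ∀ w : Fin k → ℂ, (∀ j, ‖w j - (a j : ℂ)‖ < δ) → F w = 0 :=
    fun w hw => key k w hw fun j hj => absurd (hj.trans_lt j.isLt) (lt_irrefl k)
  -- Step 2: clopen argument on U
  set V : Set (Fin k → ℂ) := {z | ∀ᶠ w in nhds z, F w = 0} with hV
  have hVopen : IsOpen V := by
    rw [isOpen_iff_mem_nhds]
    intro z hzV
    exact hzV.eventually_nhds
  have hUsub : U ⊆ V := by
    apply hUconn.subset_of_closure_inter_subset hVopen
    · refine ⟨fun j => ((a j : ℝ) : ℂ), hUreal a, ?_⟩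
      have hSopen : IsOpen {z : Fin k → ℂ | ∀ j, ‖z j - (a j : ℂ)‖ < δ} := by
        have : {z : Fin k → ℂ | ∀ j, ‖z j - (a j : ℂ)‖ < δ} =
            ⋂ j, (fun z : Fin k → ℂ => z j) ⁻¹' Metric.ball ((a j : ℝ) : ℂ) δ := by
          ext w; simp [Complex.dist_eq]
        rw [this]
        exact isOpen_iInter_of_finite fun j => Metric.isOpen_ball.preimage (continuous_apply j)
      apply Filter.eventually_of_mem (hSopen.mem_nhds (by intro j; simpa using hδ))
      exact hPzero
    · -- limit points of V in U are in V
      intro z ⟨hzc, hzU⟩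
      obtain ⟨r, hr, hrU⟩ := Metric.isOpen_iff.mp hUopen z hzU
      -- get a point b of V within r/2 of z
      obtain ⟨b, hbV, hbd⟩ := Metric.mem_closure_iff.mp hzc (r / 2) (by positivity)
      -- get a small polydisc around b inside the zero set
      have hbz : ∀ᶠ w in nhds b, F w = 0 := hbV
      obtain ⟨ε₀, hε₀, hball⟩ := Metric.eventually_nhds_iff_ball.mp hbz
      set ε : ℝ := min (ε₀ / 2) (r / 4) with hεdef
      have hε : 0 < ε := by positivity
      have hzero_small : ∀ w : Fin k → ℂ, (∀ j, ‖w j - b j‖ < ε) → F w = 0 := by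
        intro w hw
        apply hball
        rcases Nat.eq_zero_or_pos k with hk | hk
        · -- k = 0 : distance is 0
          have : dist w b = 0 := by
            subst hk
            simp [dist_pi_def]
          simpa [Metric.mem_ball, this] using hε₀
        · rw [Metric.mem_ball, dist_pi_lt_iff hε₀]
          intro j
          calc dist (w j) (b j) = ‖w j - b j‖ := Complex.dist_eq _ _
            _ < ε := hw j
            _ ≤ ε₀ / 2 := min_le_left _ _
            _ < ε₀ := by linarith
      -- propagate to the polydisc of radius r/... around z
      have hbig : {w : Fin k → ℂ | ∀ j, ‖w j - z j‖ < r} ⊆ U := by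
        intro w hw
        apply hrU
        rcases Nat.eq_zero_or_pos k with hk | hk
        · have : dist w z = 0 := by subst hk; simp [dist_pi_def]
          simpa [Metric.mem_ball, this] using hr
        · rw [Metric.mem_ball, dist_pi_lt_iff hr]
          intro j
          rw [Complex.dist_eq]
          exact hw j
      have hzero_big := poly_propagate hUopen hF z b r ε hε
        (fun j => by
          have h1 : ‖b j - z j‖ ≤ dist b z := by
            rw [← Complex.dist_eq]
            exact dist_le_pi_dist b z j
          have h2 : ε ≤ r / 4 := min_le_right _ _
          have h3 : dist b z = dist z b := dist_comm _ _
          linarith)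
        hbig hzero_small
      -- conclude z ∈ V
      have hSopen : IsOpen {w : Fin k → ℂ | ∀ j, ‖w j - z j‖ < r} := by
        have : {w : Fin k → ℂ | ∀ j, ‖w j - z j‖ < r} =
            ⋂ j, (fun w : Fin k → ℂ => w j) ⁻¹' Metric.ball (z j) r := by
          ext w; simp [Complex.dist_eq]
        rw [this]
        exact isOpen_iInter_of_finite fun j => Metric.isOpen_ball.preimage (continuous_apply j)
      exact Filter.eventually_of_mem (hSopen.mem_nhds (by intro j; simpa using hr)) hzero_big
  intro z hzU
  exact (hUsub hzU).self_of_nhds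
end

section
/- Let α_1, …, α_d be nonzero real numbers and let k be the dimension over ℚ of the ℚ-vector space spanned by α_1, …, α_d in ℝ. Then the closure in the torus T^d = ℝ^d/ℤ^d of the one-parameter subgroup {(α_1 t, …, α_d t) + ℤ^d : t ∈ ℝ} is a closed connected compact abelian subgroup isomorphic (as a topological group) to a k-dimensional torus. -/
open Complex Finset Real

lemma one_add_cos_eq (x : ℝ) :
    ((1 + Real.cos x : ℝ) : ℂ) =
      (1 + Complex.exp (x * I)) ^ 2 * (Complex.exp (x * I))⁻¹ / 2 := by
  have hw : Complex.exp (x * I) ≠ 0 := Complex.exp_ne_zero _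
  rw [Complex.ofReal_add, Complex.ofReal_cos, Complex.cos, Complex.ofReal_one, neg_mul,
    Complex.exp_neg]
  field_simp
  ring

lemma one_add_cos_pow (m : ℕ) (x : ℝ) :
    ((1 + Real.cos x : ℝ) : ℂ) ^ m =
      (2 : ℂ)⁻¹ ^ m * ∑ r ∈ range (2 * m + 1),
        ((2 * m).choose r : ℂ) * Complex.exp ((((r : ℤ) - m : ℤ) : ℂ) * (x * I)) := by
  have hw : Complex.exp (x * I) ≠ 0 := Complex.exp_ne_zero _
  have h2 : ((1 + Complex.exp (x * I)) ^ 2) ^ m = (1 + Complex.exp (x * I)) ^ (2 * m) := by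
    rw [← pow_mul]
  have hsum : ∀ r ∈ range (2 * m + 1),
      Complex.exp (x * I) ^ r * (1:ℂ) ^ (2 * m - r) * ((2 * m).choose r : ℂ)
        * ((Complex.exp (x * I)) ⁻¹) ^ m
      = ((2 * m).choose r : ℂ) * Complex.exp ((((r : ℤ) - m : ℤ) : ℂ) * (x * I)) := by
    intro r hr
    have h1 : Complex.exp ((((r : ℤ) - m : ℤ) : ℂ) * (x * I))
        = Complex.exp (x * I) ^ ((r : ℤ) - (m : ℤ)) := by
      rw [← Complex.exp_int_mul]
    rw [h1, zpow_sub₀ hw, zpow_natCast, zpow_natCast, one_pow, inv_pow]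
    ring
  calc ((1 + Real.cos x : ℝ) : ℂ) ^ m
      = (1 + Complex.exp (x * I)) ^ (2 * m) * ((Complex.exp (x * I))⁻¹) ^ m * (2:ℂ)⁻¹ ^ m := by
        rw [one_add_cos_eq, div_pow, mul_pow, h2, inv_pow]; rw [div_eq_mul_inv, inv_pow]
    _ = (∑ r ∈ range (2 * m + 1), Complex.exp (x * I) ^ r * (1:ℂ) ^ (2 * m - r)
          * ((2 * m).choose r : ℂ) * ((Complex.exp (x * I))⁻¹) ^ m) * (2:ℂ)⁻¹ ^ m := by
        rw [add_comm (1:ℂ), add_pow, Finset.sum_mul]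
    _ = (2 : ℂ)⁻¹ ^ m * ∑ r ∈ range (2 * m + 1),
        ((2 * m).choose r : ℂ) * Complex.exp ((((r : ℤ) - m : ℤ) : ℂ) * (x * I)) := by
        rw [Finset.sum_congr rfl hsum]; ring


lemma cos_le_of_norm_addCircle (δ u : ℝ) (hδ0 : 0 < δ) (hδ2 : δ ≤ 1/2)
    (h : δ ≤ ‖(u : AddCircle (1:ℝ))‖) :
    Real.cos (2 * π * u) ≤ Real.cos (2 * π * δ) := by
  have hnorm : ‖(u : AddCircle (1:ℝ))‖ = |u - round u| := by
    rw [AddCircle.norm_eq]; norm_num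
  set v := u - round u with hv
  have hcos : Real.cos (2 * π * u) = Real.cos (2 * π * v) := by
    have : 2 * π * u = 2 * π * v + (round u) * (2 * π) := by ring
    rw [this, Real.cos_add_int_mul_two_pi]
  rw [hcos, ← Real.cos_abs (2 * π * v)]
  have habs : |2 * π * v| = 2 * π * |v| := by
    rw [abs_mul]
    have : |2 * π| = 2 * π := abs_of_pos (by positivity)
    rw [this]
  rw [habs]
  have hvle : |v| ≤ 1/2 := by
    have := abs_sub_round u
    simpa [hv] using this
  apply Real.cos_le_cos_of_nonneg_of_le_pi
  · positivity
  · nlinarith [Real.pi_pos]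
  · nlinarith [Real.pi_pos, hnorm ▸ h]

lemma g_expansion (k m : ℕ) (γ a' : Fin k → ℝ) (t : ℝ) :
    ((∏ i, (1 + Real.cos (2 * π * (γ i * t - a' i))) ^ m : ℝ) : ℂ)
      = ∑ ρ ∈ Fintype.piFinset (fun _ : Fin k => Finset.range (2 * m + 1)),
          (2:ℂ)⁻¹ ^ (m * k) * (∏ i, (((2 * m).choose (ρ i) : ℕ) : ℂ))
            * Complex.exp (((-(2 * π * ∑ i, (((ρ i : ℤ) - m : ℤ) : ℝ) * a' i) : ℝ) : ℂ) * I)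
            * Complex.exp ((((2 * π * ∑ i, (((ρ i : ℤ) - m : ℤ) : ℝ) * γ i : ℝ) : ℂ) * I) * t) := by
  rw [Complex.ofReal_prod]
  rw [Finset.prod_congr rfl (fun i (_ : i ∈ Finset.univ) => by
    rw [Complex.ofReal_pow, one_add_cos_pow m (2 * π * (γ i * t - a' i))])]
  rw [Finset.prod_mul_distrib, Finset.prod_const, Finset.card_univ, Fintype.card_fin,
    ← pow_mul, Finset.prod_univ_sum, Finset.mul_sum]
  apply Finset.sum_congr rfl
  intro ρ hρ
  rw [Finset.prod_mul_distrib, ← Complex.exp_sum]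
  have key : ∑ i, ((((ρ i : ℤ) - m : ℤ) : ℂ) * ((2 * π * (γ i * t - a' i) : ℝ) * I))
      = ((-(2 * π * ∑ i, (((ρ i : ℤ) - m : ℤ) : ℝ) * a' i) : ℝ) : ℂ) * I
        + (((2 * π * ∑ i, (((ρ i : ℤ) - m : ℤ) : ℝ) * γ i : ℝ) : ℂ) * I) * t := by
    have h1 : ∀ i : Fin k, ((((ρ i : ℤ) - m : ℤ) : ℂ) * ((2 * π * (γ i * t - a' i) : ℝ) * I))
        = -((2 * π * ((((ρ i : ℤ) - m : ℤ) : ℝ) * a' i) : ℝ) : ℂ) * I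
          + (((2 * π * ((((ρ i : ℤ) - m : ℤ) : ℝ) * γ i) : ℝ) : ℂ) * I) * t := by
      intro i; push_cast; ring
    rw [Finset.sum_congr rfl (fun i _ => h1 i), Finset.sum_add_distrib]
    push_cast
    rw [← Finset.sum_mul, ← Finset.sum_mul, ← Finset.sum_mul, Finset.sum_neg_distrib,
      Finset.mul_sum, Finset.mul_sum]
  rw [key, Complex.exp_add]
  ring

lemma integral_exp_bound (ω T : ℝ) (hω : ω ≠ 0) :
    ‖∫ t in (0:ℝ)..T, Complex.exp (((ω : ℂ) * I) * t)‖ ≤ 2 / |ω| := by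
  have hc : ((ω : ℂ) * I) ≠ 0 := by
    simp [Complex.ext_iff, hω, I_ne_zero]
  rw [integral_exp_mul_complex hc]
  have habs : ∀ s : ℝ, ‖Complex.exp (((ω : ℂ) * I) * s)‖ = 1 := by
    intro s
    have : ((ω : ℂ) * I) * s = ((ω * s : ℝ) : ℂ) * I := by push_cast; ring
    rw [this]
    exact Complex.norm_exp_ofReal_mul_I _
  rw [norm_div]
  have h1 : ‖((ω:ℂ) * I)‖ = |ω| := by
    rw [norm_mul, Complex.norm_I, mul_one, Complex.norm_real, Real.norm_eq_abs]
  rw [h1]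
  have h2 : ‖Complex.exp (((ω:ℂ) * I) * T) - Complex.exp (((ω:ℂ) * I) * (0:ℝ))‖ ≤ 2 := by
    refine (norm_sub_le _ _).trans ?_
    rw [habs T, habs 0]; norm_num
  have h3 : (0:ℝ) < |ω| := abs_pos.mpr hω
  calc ‖Complex.exp (((ω:ℂ) * I) * T) - Complex.exp (((ω:ℂ) * I) * (0:ℝ))‖ / |ω|
      ≤ 2 / |ω| := by gcongr


lemma kronecker_dense {k : ℕ} (γ : Fin k → ℝ)
    (hγ : ∀ e : Fin k → ℤ, ∑ i, (e i : ℝ) * γ i = 0 → e = 0) :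
    closure {x : Fin k → AddCircle (1 : ℝ) |
      ∃ t : ℝ, x = fun i => ((γ i * t : ℝ) : AddCircle (1:ℝ))} = Set.univ := by
  set S : Set (Fin k → AddCircle (1:ℝ)) :=
    {x | ∃ t : ℝ, x = fun i => ((γ i * t : ℝ) : AddCircle (1:ℝ))} with hS
  by_contra hne
  obtain ⟨a, ha⟩ : ∃ a : Fin k → AddCircle (1:ℝ), a ∉ closure S := by
    by_contra h; push_neg at h; exact hne (Set.eq_univ_iff_forall.mpr h)
  -- lift a
  have hsurj : ∀ i, ∃ y : ℝ, (y : AddCircle (1:ℝ)) = a i := by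
    intro i
    obtain ⟨y, hy⟩ := Quotient.exists_rep (a i)
    exact ⟨y, hy⟩
  choose a' ha' using hsurj
  -- separation
  obtain ⟨ε, hε0, hball⟩ : ∃ ε > 0, ∀ b ∈ S, ε ≤ dist a b := by
    rw [Metric.mem_closure_iff] at ha; push_neg at ha; exact ha
  set δ : ℝ := min ε (1/2) with hδ
  have hδ0 : 0 < δ := lt_min hε0 (by norm_num)
  have hδhalf : δ ≤ 1/2 := min_le_right _ _
  -- pointwise separation
  have key : ∀ t : ℝ, ∃ i, δ ≤ ‖((γ i * t - a' i : ℝ) : AddCircle (1:ℝ))‖ := by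
    intro t
    by_contra h; push_neg at h
    have hmem : (fun i => ((γ i * t : ℝ) : AddCircle (1:ℝ))) ∈ S := ⟨t, rfl⟩
    refine absurd (hball _ hmem) (not_le.mpr ?_)
    have : dist a (fun i => ((γ i * t : ℝ) : AddCircle (1:ℝ))) < δ := by
      rw [dist_pi_lt_iff hδ0]
      intro i
      rw [dist_eq_norm]
      have : a i - ((γ i * t : ℝ) : AddCircle (1:ℝ))
          = -(((γ i * t - a' i : ℝ) : AddCircle (1:ℝ))) := by
        rw [← ha' i, AddCircle.coe_sub, neg_sub]
      rw [this, norm_neg]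
      exact h i
    exact this.trans_le (min_le_left _ _)
  -- k = 0 is impossible
  rcases Nat.eq_zero_or_pos k with rfl | hk1
  · obtain ⟨i, -⟩ := key 0
    exact i.elim0
  -- the contraction constant
  set Q : ℝ := (1 + Real.cos (2 * π * δ)) / 2 with hQ
  have hQ0 : 0 ≤ Q := by
    have := Real.neg_one_le_cos (2 * π * δ)
    rw [hQ]; linarith
  have hQ1 : Q < 1 := by
    have h1 : Real.cos (2 * π * δ) < Real.cos 0 := by
      apply Real.cos_lt_cos_of_nonneg_of_le_pi le_rfl
      · nlinarith [Real.pi_pos, hδhalf]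
      · positivity
    rw [Real.cos_zero] at h1
    rw [hQ]; linarith
  -- choose m
  obtain ⟨m, hm1, hmlt⟩ : ∃ m : ℕ, 1 ≤ m ∧ ((2 * m + 1 : ℝ)) ^ k * Q ^ m < 1 := by
    have hsum : Summable (fun n : ℕ => (n : ℝ) ^ k * Q ^ n) :=
      summable_pow_mul_geometric_of_norm_lt_one k
        (by rwa [Real.norm_eq_abs, _root_.abs_of_nonneg hQ0])
    have htend : Filter.Tendsto (fun n : ℕ => (n : ℝ) ^ k * Q ^ n)
        Filter.atTop (nhds 0) := hsum.tendsto_atTop_zero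
    have htend3 : Filter.Tendsto (fun n : ℕ => (3:ℝ) ^ k * ((n : ℝ) ^ k * Q ^ n))
        Filter.atTop (nhds 0) := by
      simpa using htend.const_mul ((3:ℝ) ^ k)
    have hev := htend3.eventually (gt_mem_nhds (by norm_num : (0:ℝ) < 1))
    obtain ⟨m, hm⟩ := (hev.and (Filter.eventually_ge_atTop 1)).exists
    refine ⟨m, hm.2, ?_⟩
    have hm1' : (1:ℝ) ≤ (m:ℝ) := by exact_mod_cast hm.2
    have hle : ((2 * m + 1 : ℝ)) ^ k ≤ (3:ℝ) ^ k * (m:ℝ) ^ k := by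
      rw [← mul_pow]
      apply pow_le_pow_left₀ (by positivity)
      linarith
    calc ((2 * m + 1 : ℝ)) ^ k * Q ^ m ≤ (3:ℝ) ^ k * (m:ℝ) ^ k * Q ^ m := by
          apply mul_le_mul_of_nonneg_right hle (by positivity)
      _ = (3:ℝ) ^ k * ((m:ℝ) ^ k * Q ^ m) := by ring
      _ < 1 := hm.1
  -- the test function
  set g : ℝ → ℝ := fun t => ∏ i, (1 + Real.cos (2 * π * (γ i * t - a' i))) ^ m with hg
  set P : Finset (Fin k → ℕ) := Fintype.piFinset (fun _ : Fin k => Finset.range (2 * m + 1))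
    with hP
  set ρ₀ : Fin k → ℕ := fun _ => m with hρ₀
  have hρ₀P : ρ₀ ∈ P := by
    rw [hP, Fintype.mem_piFinset]
    intro i; simp only [hρ₀, Finset.mem_range]; omega
  set ω : (Fin k → ℕ) → ℝ := fun ρ => 2 * π * ∑ i, (((ρ i : ℤ) - m : ℤ) : ℝ) * γ i with hω
  set coef : (Fin k → ℕ) → ℂ := fun ρ =>
    (2:ℂ)⁻¹ ^ (m * k) * (∏ i, (((2 * m).choose (ρ i) : ℕ) : ℂ))
      * Complex.exp (((-(2 * π * ∑ i, (((ρ i : ℤ) - m : ℤ) : ℝ) * a' i) : ℝ) : ℂ) * I)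
    with hcoef
  have hω0 : ∀ ρ, ρ ≠ ρ₀ → ω ρ ≠ 0 := by
    intro ρ hρ hzero
    rw [hω] at hzero
    have hπ : (2 * π : ℝ) ≠ 0 := by positivity
    have hsum0 : ∑ i, (((ρ i : ℤ) - m : ℤ) : ℝ) * γ i = 0 := by
      rcases mul_eq_zero.mp hzero with h | h
      · exact absurd h hπ
      · exact h
    have := hγ (fun i => (ρ i : ℤ) - m) hsum0
    apply hρ
    funext i
    have hi := congrFun this i
    simp only [Pi.zero_apply, sub_eq_zero] at hi
    rw [hρ₀]
    exact_mod_cast hi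
  -- constants
  set c0 : ℝ := ((2:ℝ)⁻¹ ^ (m * k)) * (((2 * m).choose m : ℕ) : ℝ) ^ k with hc0
  set B : ℝ := (1 + Real.cos (2 * π * δ)) ^ m * 2 ^ (m * (k - 1)) with hB
  set E : ℝ := ∑ ρ ∈ P.erase ρ₀, ‖coef ρ‖ * (2 / |ω ρ|) with hE
  have hE0 : 0 ≤ E := by
    rw [hE]
    apply Finset.sum_nonneg
    intro ρ _
    exact mul_nonneg (norm_nonneg _) (div_nonneg (by norm_num) (abs_nonneg _))
  -- claim A : Fourier lower bound
  have claimA : ∀ T : ℝ, |(∫ t in (0:ℝ)..T, g t) - c0 * T| ≤ E := by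
    intro T
    set F : (Fin k → ℕ) → ℝ → ℂ := fun ρ t =>
      coef ρ * Complex.exp ((((ω ρ : ℝ) : ℂ) * I) * t) with hF
    have hgF : ∀ t : ℝ, ((g t : ℝ) : ℂ) = ∑ ρ ∈ P, F ρ t := by
      intro t
      simp only [hg, hF, hcoef, hω, hP]
      exact g_expansion k m γ a' t
    have hFcont : ∀ ρ : Fin k → ℕ, Continuous (F ρ) := by
      intro ρ
      apply Continuous.mul continuous_const
      apply Complex.continuous_exp.comp
      exact (continuous_const.mul Complex.continuous_ofReal)
    have hint : ∫ t in (0:ℝ)..T, ((g t : ℝ) : ℂ) = ∑ ρ ∈ P, ∫ t in (0:ℝ)..T, F ρ t := by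
      rw [intervalIntegral.integral_congr (g := fun t => ∑ ρ ∈ P, F ρ t)
        (fun t _ => hgF t)]
      exact intervalIntegral.integral_finset_sum
        (fun ρ _ => (hFcont ρ).intervalIntegrable _ _)
    have hωρ₀ : ω ρ₀ = 0 := by
      simp [hω, hρ₀]
    have hφρ₀ : ∑ i, (((ρ₀ i : ℤ) - m : ℤ) : ℝ) * a' i = 0 := by
      simp [hρ₀]
    have hcoefρ₀ : coef ρ₀ = ((c0 : ℝ) : ℂ) := by
      rw [hcoef, hc0]
      simp only [hρ₀]
      rw [hφρ₀]
      push_cast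
      simp [Finset.prod_const]
    have hmain : ∫ t in (0:ℝ)..T, F ρ₀ t = ((c0 * T : ℝ) : ℂ) := by
      have hc : ∀ t ∈ Set.uIcc (0:ℝ) T, F ρ₀ t = ((c0 : ℝ) : ℂ) := by
        intro t _
        rw [hF]
        simp only [hωρ₀, hcoefρ₀]
        push_cast
        simp
      rw [intervalIntegral.integral_congr hc, intervalIntegral.integral_const]
      push_cast
      rw [Complex.real_smul]
      push_cast
      ring
    have hbound : ∀ ρ ∈ P.erase ρ₀,
        ‖∫ t in (0:ℝ)..T, F ρ t‖ ≤ ‖coef ρ‖ * (2 / |ω ρ|) := by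
      intro ρ hρ
      have hρne : ρ ≠ ρ₀ := (Finset.mem_erase.mp hρ).1
      have hω' := hω0 ρ hρne
      rw [hF]
      simp only
      rw [intervalIntegral.integral_const_mul, norm_mul]
      exact mul_le_mul_of_nonneg_left (integral_exp_bound (ω ρ) T hω') (norm_nonneg _)
    have hsplit : ∑ ρ ∈ P, ∫ t in (0:ℝ)..T, F ρ t
        = (∫ t in (0:ℝ)..T, F ρ₀ t) + ∑ ρ ∈ P.erase ρ₀, ∫ t in (0:ℝ)..T, F ρ t :=
      (Finset.add_sum_erase P _ hρ₀P).symm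
    have hre : ((((∫ t in (0:ℝ)..T, g t) - c0 * T : ℝ)) : ℂ)
        = ∑ ρ ∈ P.erase ρ₀, ∫ t in (0:ℝ)..T, F ρ t := by
      push_cast
      rw [← intervalIntegral.integral_ofReal, hint, hsplit, hmain]
      push_cast
      ring
    calc |(∫ t in (0:ℝ)..T, g t) - c0 * T|
        = ‖((((∫ t in (0:ℝ)..T, g t) - c0 * T : ℝ)) : ℂ)‖ := by
          rw [Complex.norm_real, Real.norm_eq_abs]
      _ = ‖∑ ρ ∈ P.erase ρ₀, ∫ t in (0:ℝ)..T, F ρ t‖ := by rw [hre]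
      _ ≤ ∑ ρ ∈ P.erase ρ₀, ‖∫ t in (0:ℝ)..T, F ρ t‖ := norm_sum_le _ _
      _ ≤ E := Finset.sum_le_sum hbound
  -- claim B : pointwise upper bound
  have hgB : ∀ t : ℝ, g t ≤ B := by
    intro t
    obtain ⟨i₀, hi₀⟩ := key t
    have hsplit : g t = (1 + Real.cos (2 * π * (γ i₀ * t - a' i₀))) ^ m
        * ∏ i ∈ Finset.univ.erase i₀, (1 + Real.cos (2 * π * (γ i * t - a' i))) ^ m := by
      rw [hg]
      exact (Finset.mul_prod_erase Finset.univ _ (Finset.mem_univ i₀)).symm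
    have hf0 : ∀ i : Fin k, (0:ℝ) ≤ 1 + Real.cos (2 * π * (γ i * t - a' i)) := by
      intro i
      have := Real.neg_one_le_cos (2 * π * (γ i * t - a' i))
      linarith
    have h1 : (1 + Real.cos (2 * π * (γ i₀ * t - a' i₀))) ^ m
        ≤ (1 + Real.cos (2 * π * δ)) ^ m := by
      apply pow_le_pow_left₀ (hf0 i₀)
      have := cos_le_of_norm_addCircle δ (γ i₀ * t - a' i₀) hδ0 hδhalf hi₀
      linarith
    have h2 : (∏ i ∈ Finset.univ.erase i₀, (1 + Real.cos (2 * π * (γ i * t - a' i))) ^ m)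
        ≤ 2 ^ (m * (k - 1)) := by
      have hcard : (Finset.univ.erase i₀).card = k - 1 := by
        rw [Finset.card_erase_of_mem (Finset.mem_univ i₀), Finset.card_univ, Fintype.card_fin]
      calc (∏ i ∈ Finset.univ.erase i₀, (1 + Real.cos (2 * π * (γ i * t - a' i))) ^ m)
          ≤ ∏ _i ∈ Finset.univ.erase i₀, (2:ℝ) ^ m := by
            apply Finset.prod_le_prod
            · intro i _; exact pow_nonneg (hf0 i) m
            · intro i _
              apply pow_le_pow_left₀ (hf0 i)
              have := Real.cos_le_one (2 * π * (γ i * t - a' i))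
              linarith
        _ = ((2:ℝ) ^ m) ^ (k - 1) := by rw [Finset.prod_const, hcard]
        _ = 2 ^ (m * (k - 1)) := by rw [← pow_mul]
    rw [hsplit, hB]
    apply mul_le_mul h1 h2 (Finset.prod_nonneg (fun i _ => pow_nonneg (hf0 i) m))
    apply pow_nonneg
    have := Real.neg_one_le_cos (2 * π * δ)
    linarith
  have hg0 : ∀ t : ℝ, 0 ≤ g t := by
    intro t
    apply Finset.prod_nonneg
    intro i _
    have := Real.neg_one_le_cos (2 * π * (γ i * t - a' i))
    apply pow_nonneg
    linarith
  have hgcont : Continuous g := by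
    rw [hg]
    apply continuous_finset_prod
    intro i _
    fun_prop
  have claimB : ∀ T : ℝ, 0 ≤ T → (∫ t in (0:ℝ)..T, g t) ≤ B * T := by
    intro T hT
    have h1 : (∫ t in (0:ℝ)..T, g t) ≤ ∫ _ in (0:ℝ)..T, B := by
      apply intervalIntegral.integral_mono_on hT
        (hgcont.intervalIntegrable _ _) (intervalIntegrable_const)
      intro x _
      exact hgB x
    rw [intervalIntegral.integral_const, smul_eq_mul, sub_zero, mul_comm T B] at h1
    exact h1
  -- B < c0
  have hBc0 : B < c0 := by
    have hexp : m + m * (k - 1) = m * k := by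
      have h : m * (k - 1) + m * 1 = m * k := by
        rw [← Nat.mul_add]
        congr 1
        omega
      omega
    have h2Q : (1 + Real.cos (2 * π * δ)) = 2 * Q := by rw [hQ]; ring
    have h3 : B = 2 ^ (m * k) * Q ^ m := by
      rw [hB, h2Q, mul_pow, mul_comm ((2:ℝ)^m * Q^m), ← mul_assoc, mul_comm ((2:ℝ)^(m*(k-1))),
        ← pow_add, hexp]
    have hchoose : (4:ℝ) ^ m / (2 * m + 1) ≤ (((2 * m).choose m : ℕ) : ℝ) := by
      rw [div_le_iff₀ (by positivity)]
      have := Nat.four_pow_le_two_mul_add_one_mul_central_binom m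
      calc (4:ℝ) ^ m ≤ (((2 * m + 1) * (2 * m).choose m : ℕ) : ℝ) := by exact_mod_cast this
        _ = (((2 * m).choose m : ℕ) : ℝ) * (2 * m + 1) := by push_cast; ring
    have h1 : 2⁻¹ ^ (m * k) * ((4:ℝ) ^ m / (2 * (m:ℝ) + 1)) ^ k ≤ c0 := by
      rw [hc0]
      apply mul_le_mul_of_nonneg_left _ (by positivity)
      apply pow_le_pow_left₀ (by positivity) hchoose
    have h2 : 2⁻¹ ^ (m * k) * ((4:ℝ) ^ m / (2 * (m:ℝ) + 1)) ^ k
        = 2 ^ (m * k) / (2 * (m:ℝ) + 1) ^ k := by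
      rw [div_pow, ← pow_mul, show (4:ℝ) = 2 ^ 2 by norm_num, ← pow_mul, inv_pow]
      rw [show 2 * (m * k) = m * k + m * k by ring, pow_add]
      field_simp
    have h4 : 2 ^ (m * k) * Q ^ m < 2 ^ (m * k) / (2 * (m:ℝ) + 1) ^ k := by
      rw [lt_div_iff₀ (by positivity)]
      calc 2 ^ (m * k) * Q ^ m * (2 * (m:ℝ) + 1) ^ k
          = 2 ^ (m * k) * ((2 * (m:ℝ) + 1) ^ k * Q ^ m) := by ring
        _ < 2 ^ (m * k) * 1 := by
            apply mul_lt_mul_of_pos_left hmlt (by positivity)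
        _ = 2 ^ (m * k) := mul_one _
    rw [h3]
    calc 2 ^ (m * k) * Q ^ m < 2 ^ (m * k) / (2 * (m:ℝ) + 1) ^ k := h4
      _ = 2⁻¹ ^ (m * k) * ((4:ℝ) ^ m / (2 * (m:ℝ) + 1)) ^ k := h2.symm
      _ ≤ c0 := h1
  -- contradiction
  set T : ℝ := (E + 1) / (c0 - B) with hT
  have hT0 : 0 < T := by
    apply div_pos (by linarith) (by linarith)
  have h1 : c0 * T - E ≤ ∫ t in (0:ℝ)..T, g t := by
    have := claimA T
    have := abs_le.mp this
    linarith [this.1]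
  have h2 := claimB T hT0.le
  have h3 : (c0 - B) * T ≤ E := by nlinarith
  rw [hT] at h3
  rw [mul_comm, div_mul_cancel₀] at h3
  · linarith
  · linarith

lemma addCircle_coe_sum {ι : Type*} (s : Finset ι) (f : ι → ℝ) :
    ((∑ i ∈ s, f i : ℝ) : AddCircle (1:ℝ)) = ∑ i ∈ s, ((f i : ℝ) : AddCircle (1:ℝ)) :=
  map_sum (QuotientAddGroup.mk' (AddSubgroup.zmultiples (1:ℝ))) f s

/-- The closure in the torus `T^d = ℝ^d/ℤ^d` of the one-parameter subgroup
`{(α₁ t, …, α_d t) + ℤ^d : t ∈ ℝ}` (with all `α_j ≠ 0`) is a closed connected compact abelian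
subgroup, isomorphic as a topological group to the `k`-dimensional torus, where
`k = dim_ℚ ⟨α₁,…,α_d⟩_ℚ`. -/
theorem closure_one_parameter_subgroup_torus (d k : ℕ) (α : Fin d → ℝ)
    (hα : ∀ j, α j ≠ 0)
    (hk : k = Module.finrank ℚ ↥(Submodule.span ℚ (Set.range α))) :
    ∃ H : AddSubgroup (Fin d → AddCircle (1 : ℝ)),
      (H : Set (Fin d → AddCircle (1 : ℝ))) =
        closure {x : Fin d → AddCircle (1 : ℝ) |
          ∃ t : ℝ, x = fun j => ((α j * t : ℝ) : AddCircle (1 : ℝ))} ∧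
      IsClosed (H : Set (Fin d → AddCircle (1 : ℝ))) ∧
      IsCompact (H : Set (Fin d → AddCircle (1 : ℝ))) ∧
      IsConnected (H : Set (Fin d → AddCircle (1 : ℝ))) ∧
      ∃ e : H ≃ₜ (Fin k → AddCircle (1 : ℝ)), ∀ a b : H, e (a + b) = e a + e b := by
  haveI : Fact ((0:ℝ) < 1) := ⟨one_pos⟩
  -- the integer span of the α's
  set Vz : Submodule ℤ ℝ := Submodule.span ℤ (Set.range α) with hVz
  haveI : Module.Finite ℤ Vz := Module.Finite.span_of_finite ℤ (Set.finite_range α)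
  haveI : Module.Free ℤ Vz := Module.free_of_finite_type_torsion_free'
  set ι := Module.Free.ChooseBasisIndex ℤ Vz with hι
  set b0 : Module.Basis ι ℤ Vz := Module.Free.chooseBasis ℤ Vz with hb0
  set γ' : ι → ℝ := fun i => ((b0 i : Vz) : ℝ) with hγ'
  -- γ' is ℤ-linearly independent in ℝ
  have hindZ : LinearIndependent ℤ γ' := by
    have := b0.linearIndependent
    have h2 := this.map' Vz.subtype (Submodule.ker_subtype Vz)
    exact h2
  -- hence ℚ-linearly independent
  have hindQ : LinearIndependent ℚ γ' := by
    rw [← LinearIndependent.iff_fractionRing (R := ℤ) (K := ℚ)]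
    exact hindZ
  -- span of γ' over ℤ is Vz
  have hspanZ : Submodule.span ℤ (Set.range γ') = Vz := by
    have h1 : Set.range γ' = (Vz.subtype) '' (Set.range (b0 : ι → Vz)) := by
      rw [← Set.range_comp]; rfl
    rw [h1, ← Submodule.map_span, b0.span_eq, Submodule.map_top, Submodule.range_subtype]
  -- span of γ' over ℚ equals span of α over ℚ
  have hspanQ : Submodule.span ℚ (Set.range γ') = Submodule.span ℚ (Set.range α) := by
    apply le_antisymm
    · rw [Submodule.span_le]
      intro x hx
      obtain ⟨i, rfl⟩ := hx
      have h1 : γ' i ∈ Vz := by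
        rw [hγ']; exact (b0 i).2
      have h2 : Vz ≤ (Submodule.span ℚ (Set.range α)).restrictScalars ℤ := by
        rw [hVz]
        exact Submodule.span_le_restrictScalars ℤ ℚ (Set.range α)
      exact h2 h1
    · rw [Submodule.span_le]
      intro x hx
      obtain ⟨j, rfl⟩ := hx
      have h1 : α j ∈ Vz := Submodule.subset_span ⟨j, rfl⟩
      rw [← hspanZ] at h1
      have h2 : Submodule.span ℤ (Set.range γ')
          ≤ (Submodule.span ℚ (Set.range γ')).restrictScalars ℤ :=
        Submodule.span_le_restrictScalars ℤ ℚ (Set.range γ')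
      exact h2 h1
  -- k equals the cardinality of ι
  haveI : Fintype ι := inferInstance
  have hcard : Fintype.card ι = k := by
    rw [hk, ← hspanQ, finrank_span_eq_card hindQ]
  set eι : ι ≃ Fin k := Fintype.equivFinOfCardEq hcard with heι
  set γ : Fin k → ℝ := γ' ∘ eι.symm with hγdef
  -- integer linear independence of γ
  have hγint : ∀ e : Fin k → ℤ, ∑ i, (e i : ℝ) * γ i = 0 → e = 0 := by
    intro e he
    have hind : LinearIndependent ℤ γ := hindZ.comp eι.symm eι.symm.injective
    have h2 := (Fintype.linearIndependent_iff.mp hind) e ?_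
    · funext i; exact h2 i
    · rw [← he]
      apply Finset.sum_congr rfl
      intro i _
      simp [zsmul_eq_mul]
  -- the integer matrix M
  have hmem : ∀ j, α j ∈ Vz := fun j => Submodule.subset_span ⟨j, rfl⟩
  set M : Fin d → Fin k → ℤ := fun j i => b0.repr ⟨α j, hmem j⟩ (eι.symm i) with hM
  have hα_eq : ∀ j, α j = ∑ i, (M j i : ℝ) * γ i := by
    intro j
    have h1 := b0.sum_repr ⟨α j, hmem j⟩
    have h2 : ((∑ i, b0.repr ⟨α j, hmem j⟩ i • b0 i : Vz) : ℝ) = α j := by rw [h1]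
    rw [← h2]
    rw [← Equiv.sum_comp eι.symm (fun i => b0.repr ⟨α j, hmem j⟩ i • b0 i)]
    push_cast
    apply Finset.sum_congr rfl
    intro i _
    rw [hM, hγdef]
    simp [zsmul_eq_mul, hγ']
  -- rows of M generate ℤ^k
  have hrows : ∀ i : Fin k, ∃ n : Fin d → ℤ,
      ∀ i' : Fin k, ∑ j, n j * M j i' = if i' = i then 1 else 0 := by
    intro i
    have h1 : ((b0 (eι.symm i) : Vz) : ℝ) ∈ Submodule.span ℤ (Set.range α) :=
      hVz ▸ (b0 (eι.symm i)).2
    rw [Submodule.mem_span_range_iff_exists_fun] at h1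
    obtain ⟨n, hn⟩ := h1
    refine ⟨n, fun i' => ?_⟩
    have h2 : (∑ j, n j • (⟨α j, hmem j⟩ : Vz)) = b0 (eι.symm i) := by
      apply Subtype.ext
      push_cast
      exact hn
    have h3 := congrArg (fun v => (b0.repr v) (eι.symm i')) h2
    simp only [map_sum, map_zsmul] at h3
    rw [b0.repr_self] at h3
    rw [Finsupp.single_apply] at h3
    have h4 : ∑ j, n j * M j i' = ∑ j, n j • (b0.repr ⟨α j, hmem j⟩) (eι.symm i') := by
      apply Finset.sum_congr rfl
      intro j _
      simp only [hM, zsmul_eq_mul, Int.cast_id]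
    rw [h4]
    have h5 : (∑ j, n j • b0.repr ⟨α j, hmem j⟩) (eι.symm i')
        = ∑ j, n j • (b0.repr ⟨α j, hmem j⟩) (eι.symm i') := by
      rw [Finsupp.finset_sum_apply]
      apply Finset.sum_congr rfl
      intro j _
      rfl
    rw [← h5, h3]
    have : (eι.symm i = eι.symm i') ↔ (i' = i) := by
      constructor
      · intro h; exact (eι.symm.injective h).symm
      · intro h; rw [h]
    simp only [this]
  -- the line sets
  set L : Set (Fin d → AddCircle (1:ℝ)) :=
    {x | ∃ t : ℝ, x = fun j => ((α j * t : ℝ) : AddCircle (1:ℝ))} with hL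
  set Lγ : Set (Fin k → AddCircle (1:ℝ)) :=
    {x | ∃ t : ℝ, x = fun i => ((γ i * t : ℝ) : AddCircle (1:ℝ))} with hLγ
  -- the torus homomorphism induced by M
  set ψ : (Fin k → AddCircle (1:ℝ)) → (Fin d → AddCircle (1:ℝ)) :=
    fun x j => ∑ i, M j i • x i with hψ
  have hψadd : ∀ x y, ψ (x + y) = ψ x + ψ y := by
    intro x y; funext j
    simp only [hψ, Pi.add_apply]
    rw [← Finset.sum_add_distrib]
    apply Finset.sum_congr rfl
    intro i _
    rw [smul_add]
  set ψhom : (Fin k → AddCircle (1:ℝ)) →+ (Fin d → AddCircle (1:ℝ)) :=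
    AddMonoidHom.mk' ψ hψadd with hψhom
  have hψcont : Continuous ψ := by
    apply continuous_pi
    intro j
    apply continuous_finset_sum
    intro i _
    exact (continuous_apply i).zsmul (M j i)
  -- ψ maps the γ-line to the α-line
  have hψline : ∀ t : ℝ, ψ (fun i => ((γ i * t : ℝ) : AddCircle (1:ℝ)))
      = fun j => ((α j * t : ℝ) : AddCircle (1:ℝ)) := by
    intro t; funext j
    simp only [hψ]
    calc ∑ i, M j i • (((γ i * t : ℝ)) : AddCircle (1:ℝ))
        = ∑ i, (((M j i • (γ i * t) : ℝ)) : AddCircle (1:ℝ)) := by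
          apply Finset.sum_congr rfl; intro i _; rw [AddCircle.coe_zsmul]
      _ = ((∑ i, M j i • (γ i * t) : ℝ) : AddCircle (1:ℝ)) := (addCircle_coe_sum _ _).symm
      _ = ((α j * t : ℝ) : AddCircle (1:ℝ)) := by
          congr 1
          rw [hα_eq j, Finset.sum_mul]
          apply Finset.sum_congr rfl
          intro i _
          rw [zsmul_eq_mul]
          ring
  -- kernel of ψ is trivial
  have hψ0 : ∀ x, ψ x = 0 → x = 0 := by
    intro x hx
    have hξ0 : ∀ i, ∃ y : ℝ, (y : AddCircle (1:ℝ)) = x i := fun i => Quotient.exists_rep (x i)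
    choose ξ hξ using hξ0
    have hj : ∀ j, ∃ mj : ℤ, (mj : ℝ) = ∑ i, (M j i : ℝ) * ξ i := by
      intro j
      have h1 : ψ x j = ((∑ i, M j i • ξ i : ℝ) : AddCircle (1:ℝ)) := by
        simp only [hψ]
        rw [addCircle_coe_sum]
        apply Finset.sum_congr rfl
        intro i _
        rw [AddCircle.coe_zsmul, hξ i]
      have h2 : ((∑ i, M j i • ξ i : ℝ) : AddCircle (1:ℝ)) = 0 := by
        rw [← h1]
        exact congrFun hx j
      rw [AddCircle.coe_eq_zero_iff] at h2
      obtain ⟨mj, hmj⟩ := h2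
      refine ⟨mj, ?_⟩
      rw [zsmul_eq_mul, mul_one] at hmj
      rw [hmj]
      apply Finset.sum_congr rfl
      intro i _
      rw [zsmul_eq_mul]
    choose mj hmj using hj
    funext i
    obtain ⟨n, hn⟩ := hrows i
    have hsum : ((∑ j, n j * mj j : ℤ) : ℝ) = ξ i := by
      push_cast
      calc ∑ j, (n j : ℝ) * (mj j : ℝ)
          = ∑ j, (n j : ℝ) * ∑ i', (M j i' : ℝ) * ξ i' := by
            apply Finset.sum_congr rfl
            intro j _
            rw [hmj j]
        _ = ∑ j, ∑ i', (n j : ℝ) * ((M j i' : ℝ) * ξ i') := by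
            apply Finset.sum_congr rfl
            intro j _
            rw [Finset.mul_sum]
        _ = ∑ i', ∑ j, (n j : ℝ) * ((M j i' : ℝ) * ξ i') := Finset.sum_comm
        _ = ∑ i', ((∑ j, n j * M j i' : ℤ) : ℝ) * ξ i' := by
            apply Finset.sum_congr rfl
            intro i' _
            push_cast
            rw [Finset.sum_mul]
            apply Finset.sum_congr rfl
            intro j _
            ring
        _ = ∑ i', (if i' = i then ξ i' else 0) := by
            apply Finset.sum_congr rfl
            intro i' _
            rw [hn i']
            split <;> norm_num
        _ = ξ i := by
            rw [Finset.sum_ite_eq' Finset.univ i (fun i' => ξ i')]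
            simp
    have hxi : x i = (((∑ j, n j * mj j : ℤ) : ℝ) : AddCircle (1:ℝ)) := by
      rw [← hξ i, hsum]
    rw [hxi]
    have : ((((∑ j, n j * mj j : ℤ) : ℝ)) : AddCircle (1:ℝ)) = 0 := by
      rw [AddCircle.coe_eq_zero_iff]
      exact ⟨∑ j, n j * mj j, by rw [zsmul_eq_mul, mul_one]⟩
    rw [this]
    rfl
  have hψinj : Function.Injective ψ := by
    intro x y hxy
    have hsub : ψ (x - y) = ψ x - ψ y := map_sub ψhom x y
    have := hψ0 (x - y) (by rw [hsub, hxy, sub_self])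
    exact sub_eq_zero.mp this
  -- range of ψ
  have hcompactRange : IsCompact (Set.range ψ) := by
    rw [← Set.image_univ]
    exact isCompact_univ.image hψcont
  have hrange : Set.range ψ = closure L := by
    apply Set.Subset.antisymm
    · have h2 : ψ '' Set.univ = ψ '' (closure Lγ) := by
        rw [hLγ, kronecker_dense γ hγint]
      have h3 : ψ '' closure Lγ ⊆ closure (ψ '' Lγ) :=
        image_closure_subset_closure_image hψcont
      have h4 : ψ '' Lγ ⊆ L := by
        rintro _ ⟨y, ⟨t, rfl⟩, rfl⟩
        exact ⟨t, hψline t⟩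
      rw [← Set.image_univ, h2]
      exact h3.trans (closure_mono h4)
    · apply closure_minimal
      · rintro x ⟨t, rfl⟩
        exact ⟨fun i => ((γ i * t : ℝ) : AddCircle (1:ℝ)), hψline t⟩
      · exact hcompactRange.isClosed
  -- connectedness of the closure
  have hLconn : IsConnected L := by
    have hLr : L = Set.range (fun t : ℝ => fun j => ((α j * t : ℝ) : AddCircle (1:ℝ))) := by
      ext x
      constructor
      · rintro ⟨t, rfl⟩; exact ⟨t, rfl⟩
      · rintro ⟨t, rfl⟩; exact ⟨t, rfl⟩
    rw [hLr]
    apply isConnected_range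
    apply continuous_pi
    intro j
    exact (continuous_quotient_mk'.comp (continuous_const.mul continuous_id))
  -- the coe of the range subgroup
  have hcoe : (ψhom.range : Set (Fin d → AddCircle (1:ℝ))) = Set.range ψ := rfl
  refine ⟨ψhom.range, ?_, ?_, ?_, ?_, ?_⟩
  · rw [hcoe, hrange]
  · rw [hcoe, hrange]; exact isClosed_closure
  · rw [hcoe]; exact hcompactRange
  · rw [hcoe, hrange]; exact hLconn.closure
  · -- the homeomorphism
    have hmemr : ∀ x, ψ x ∈ ψhom.range := fun x => ⟨x, rfl⟩
    set εe : (Fin k → AddCircle (1:ℝ)) ≃ ψhom.range :=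
      Equiv.ofBijective (fun x => (⟨ψ x, hmemr x⟩ : ψhom.range))
        ⟨fun x y h => hψinj (congrArg Subtype.val h), by
          rintro ⟨-, x, rfl⟩
          exact ⟨x, rfl⟩⟩ with hεe
    have hεcont : Continuous εe := by
      rw [hεe]
      exact Continuous.subtype_mk hψcont _
    set homeo : (Fin k → AddCircle (1:ℝ)) ≃ₜ ψhom.range :=
      hεcont.homeoOfEquivCompactToT2 with hhomeo
    refine ⟨homeo.symm, ?_⟩
    intro a b
    have hεadd : ∀ x y, εe (x + y) = εe x + εe y := by
      intro x y
      apply Subtype.ext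
      exact hψadd x y
    apply homeo.injective
    have h1 : homeo (homeo.symm (a + b)) = a + b := homeo.apply_symm_apply _
    have h2 : homeo (homeo.symm a + homeo.symm b) = a + b := by
      have he : ∀ z, homeo z = εe z := fun z => rfl
      rw [he, hεadd, ← he, ← he, homeo.apply_symm_apply, homeo.apply_symm_apply]
    rw [h1, h2]
end

section
/- Let α_1, …, α_d be nonzero reals with k = dim_ℚ⟨α_1,…,α_d⟩_ℚ, and suppose α_1,…,α_k form a ℚ-basis of this span, with Q ∈ ℚ^{d×k} the matrix satisfying (α_1,…,α_d) = Q·(α_1,…,α_k). Then there is an open set C ⊂ ℝ^k containing 0 such that for every s = (s_1,…,s_k) ∈ C there exist sequences (t^n) ⊂ ℝ and (r^n) ⊂ C with: (i) (α_1 t^n, …, α_d t^n) + ℤ^d = Q·(α_1 r^n_1, …, α_k r^n_k) + ℤ^d for all n, (ii) |t^n| → ∞, and (iii) r^n → s in ℝ^k. -/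
open Filter Topology Submodule Module

namespace TorusWindingAux

variable {k : ℕ}

variable {k : ℕ}

/-- evaluation as a linear map on Euclidean space -/
private noncomputable def eproj (j : Fin k) : EuclideanSpace ℝ (Fin k) →ₗ[ℝ] ℝ where
  toFun x := x j
  map_add' x y := rfl
  map_smul' c x := rfl

private lemma esum_apply {γ : Type*} (s : Finset γ) (f : γ → EuclideanSpace ℝ (Fin k))
    (j : Fin k) : (∑ i ∈ s, f i) j = ∑ i ∈ s, f i j :=
  map_sum (eproj j) f s

private lemma coord_dist_le (x y : EuclideanSpace ℝ (Fin k)) (j : Fin k) :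
    dist (x j) (y j) ≤ dist x y := by
  rw [EuclideanSpace.dist_eq]
  have h1 : dist (x j) (y j) = Real.sqrt (dist (x j) (y j) ^ 2) :=
    (Real.sqrt_sq dist_nonneg).symm
  rw [h1]
  apply Real.sqrt_le_sqrt
  exact Finset.single_le_sum (f := fun i => dist (x i) (y i) ^ 2)
    (fun i _ => sq_nonneg _) (Finset.mem_univ j)

/-- Recurrence: arbitrarily large near-return times, by compactness. -/
private lemma recurrence (β : Fin k → ℝ) (T : ℝ) {ε : ℝ} (hε : 0 < ε) :
    ∃ (t : ℝ) (c : Fin k → ℤ), T ≤ t ∧ ∀ j, |t * β j + (c j : ℝ)| < ε := by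
  set T' : ℝ := max T 1 with hT'
  have hT'pos : 0 < T' := lt_of_lt_of_le one_pos (le_max_right _ _)
  have hTT' : T ≤ T' := le_max_left _ _
  set x : ℕ → Fin k → ℝ := fun n j => Int.fract ((n : ℝ) * T' * β j) with hx
  have hmem : ∀ n, x n ∈ Set.Icc (0 : Fin k → ℝ) 1 := by
    intro n
    constructor <;> intro j
    · exact Int.fract_nonneg _
    · exact (Int.fract_lt_one _).le
  obtain ⟨a, -, φ, hφ, hconv⟩ := (isCompact_Icc (a := (0 : Fin k → ℝ)) (b := 1)).tendsto_subseq hmem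
  rw [Metric.tendsto_atTop] at hconv
  obtain ⟨M, hM⟩ := hconv (ε / 2) (by positivity)
  have h1 := hM M le_rfl
  have h2 := hM (M + 1) (Nat.le_succ M)
  have hd : dist (x (φ (M + 1))) (x (φ M)) < ε :=
    calc dist (x (φ (M + 1))) (x (φ M)) ≤ dist (x (φ (M+1))) a + dist (x (φ M)) a :=
          dist_triangle_right _ _ _
      _ < ε / 2 + ε / 2 := by exact add_lt_add h2 h1
      _ = ε := by ring
  set n₁ := φ M with hn₁
  set n₂ := φ (M + 1) with hn₂
  have hlt : n₁ < n₂ := hφ (Nat.lt_succ_self M)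
  refine ⟨((n₂ - n₁ : ℕ) : ℝ) * T',
    fun j => ⌊(n₁ : ℝ) * T' * β j⌋ - ⌊(n₂ : ℝ) * T' * β j⌋, ?_, ?_⟩
  · have : (1 : ℝ) ≤ ((n₂ - n₁ : ℕ) : ℝ) := by
      have : 1 ≤ n₂ - n₁ := Nat.le_sub_of_add_le (by omega)
      exact_mod_cast this
    nlinarith [hT'pos, hTT']
  · intro j
    have hcast : ((n₂ - n₁ : ℕ) : ℝ) = (n₂ : ℝ) - (n₁ : ℝ) := by
      push_cast [Nat.cast_sub hlt.le]; ring
    have heq : ((n₂ - n₁ : ℕ) : ℝ) * T' * β j +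
        ((⌊(n₁ : ℝ) * T' * β j⌋ - ⌊(n₂ : ℝ) * T' * β j⌋ : ℤ) : ℝ) =
        x n₂ j - x n₁ j := by
      simp only [hx, Int.fract]
      push_cast [hcast]
      ring
    rw [heq]
    have h3 : dist (x n₂ j) (x n₁ j) ≤ dist (x n₂) (x n₁) := dist_le_pi_dist _ _ j
    rw [Real.dist_eq] at h3
    exact lt_of_le_of_lt h3 hd
private noncomputable def lineLatt (β : Fin k → ℝ) : AddSubgroup (EuclideanSpace ℝ (Fin k)) where
  carrier := {x | ∃ (t : ℝ) (c : Fin k → ℤ), ∀ j, x j = t * β j + (c j : ℝ)}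
  zero_mem' := ⟨0, 0, fun j => by simp⟩
  add_mem' := by
    rintro x y ⟨t, cx, hxx⟩ ⟨u, cy, hyy⟩
    exact ⟨t + u, cx + cy, fun j => by
      have : (x + y) j = x j + y j := rfl
      rw [this, hxx j, hyy j]; push_cast [Pi.add_apply]; ring⟩
  neg_mem' := by
    rintro x ⟨t, cx, hxx⟩
    exact ⟨-t, -cx, fun j => by
      have : (-x) j = -(x j) := rfl
      rw [this, hxx j]; push_cast [Pi.neg_apply]; ring⟩

/-- the standard decomposition of a Euclidean vector into coordinates -/
private lemma esingle_decomp (x : EuclideanSpace ℝ (Fin k)) :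
    x = ∑ i, x i • EuclideanSpace.single i (1 : ℝ) := by
  ext j
  rw [esum_apply]
  simp only [PiLp.smul_apply, EuclideanSpace.single_apply, smul_eq_mul]
  simp [Finset.sum_ite_eq]

set_option maxHeartbeats 2000000 in
private theorem dense_lineLatt {β : Fin k → ℝ} (hβ : LinearIndependent ℚ β) :
    Dense ((lineLatt β : AddSubgroup (EuclideanSpace ℝ (Fin k))) : Set (EuclideanSpace ℝ (Fin k))) := by
  classical
  set E := EuclideanSpace ℝ (Fin k)
  set D : AddSubgroup E := lineLatt β with hD
  set H : AddSubgroup E := D.topologicalClosure with hH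
  have hHclosed : IsClosed (H : Set E) := D.isClosed_topologicalClosure
  -- the subspace of directions fully inside H
  set V : Submodule ℝ E :=
    { carrier := {v | ∀ t : ℝ, t • v ∈ H}
      add_mem' := fun hv hw t => by
        simpa [smul_add] using H.add_mem (hv t) (hw t)
      zero_mem' := fun t => by simpa using H.zero_mem
      smul_mem' := fun c v hv t => by simpa [smul_smul] using hv (t * c) } with hV
  have hVH : ∀ v ∈ V, v ∈ H := fun v hv => by simpa using hv 1
  have hβV : (WithLp.toLp 2 β : E) ∈ V := by
    intro t
    exact AddSubgroup.le_topologicalClosure D ⟨t, 0, fun j => by simp only [Pi.zero_apply, Int.cast_zero, add_zero]; rfl⟩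
  -- every vector is in V
  suffices hVtop : ∀ x : E, x ∈ V by
    intro x
    have : x ∈ H := hVH x (hVtop x)
    exact this
  -- Step 1: H is "discrete" transverse to V
  have step1 : ∃ ε > 0, ∀ h ∈ H,
      ‖h - (orthogonalProjection V h : E)‖ < ε → h ∈ V := by
    by_contra hcon
    push_neg at hcon
    have hcon' : ∀ n : ℕ, ∃ h, h ∈ H ∧
        ‖h - (orthogonalProjection V h : E)‖ < 1 / (n + 1) ∧ h ∉ V := by
      intro n
      obtain ⟨h, h1, h2, h3⟩ := hcon (1 / (n + 1)) (by positivity)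
      exact ⟨h, h1, h2, h3⟩
    choose h hhH hsmall hhV using hcon'
    set w : ℕ → E := fun n => h n - (orthogonalProjection V (h n) : E) with hw
    have hwH : ∀ n, w n ∈ H := fun n =>
      H.sub_mem (hhH n) (hVH _ (orthogonalProjection V (h n)).2)
    have hwne : ∀ n, w n ≠ 0 := by
      intro n h0
      apply hhV n
      have : h n = (orthogonalProjection V (h n) : E) := by
        have := sub_eq_zero.mp h0; exact this
      rw [this]; exact (orthogonalProjection V (h n)).2
    have hwpos : ∀ n, 0 < ‖w n‖ := fun n => norm_pos_iff.mpr (hwne n)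
    have hworth : ∀ n, w n ∈ Vᗮ := fun n => Submodule.sub_starProjection_mem_orthogonal (K := V) (h n)
    set u : ℕ → E := fun n => ‖w n‖⁻¹ • w n with hu
    have husphere : ∀ n, u n ∈ Metric.sphere (0 : E) 1 := by
      intro n
      rw [mem_sphere_zero_iff_norm, norm_smul, norm_inv, norm_norm]
      exact inv_mul_cancel₀ (hwpos n).ne'
    obtain ⟨a, hasphere, φ, hφ, hconv⟩ :=
      (isCompact_sphere (0 : E) 1).tendsto_subseq husphere
    have hwsmall : ∀ n, ‖w n‖ < 1 / (n + 1) := hsmall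
    have hwlim : Tendsto (fun n => ‖w (φ n)‖) atTop (𝓝 0) := by
      apply squeeze_zero (fun n => norm_nonneg _) (fun n => (hwsmall (φ n)).le)
      have h1 : Tendsto (fun n : ℕ => 1 / ((n : ℝ) + 1)) atTop (𝓝 0) :=
        tendsto_one_div_add_atTop_nhds_zero_nat
      apply h1.comp
      exact hφ.tendsto_atTop
    -- a is in V
    have haV : a ∈ V := by
      intro t
      have key : Tendsto (fun n => (⌊t / ‖w (φ n)‖⌋ : ℤ) • w (φ n)) atTop (𝓝 (t • a)) := by
        have heq : ∀ n, (⌊t / ‖w (φ n)‖⌋ : ℤ) • w (φ n) =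
            ((⌊t / ‖w (φ n)‖⌋ : ℝ) * ‖w (φ n)‖) • u (φ n) := by
          intro n
          rw [hu]
          rw [smul_smul, mul_assoc, mul_inv_cancel₀ (hwpos (φ n)).ne', mul_one,
            Int.cast_smul_eq_zsmul]
        simp only [heq]
        have hscal : Tendsto (fun n => (⌊t / ‖w (φ n)‖⌋ : ℝ) * ‖w (φ n)‖) atTop (𝓝 t) := by
          rw [tendsto_iff_dist_tendsto_zero]
          apply squeeze_zero (fun n => dist_nonneg)
            (g := fun n => ‖w (φ n)‖) ?_ hwlim
          intro n
          rw [Real.dist_eq]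
          have hpos := hwpos (φ n)
          have h1 : (⌊t / ‖w (φ n)‖⌋ : ℝ) ≤ t / ‖w (φ n)‖ := Int.floor_le _
          have h2 : t / ‖w (φ n)‖ - 1 < (⌊t / ‖w (φ n)‖⌋ : ℝ) := by
            have := Int.lt_floor_add_one (t / ‖w (φ n)‖); linarith
          rw [abs_le]
          constructor
          · have := mul_lt_mul_of_pos_right h2 hpos
            rw [sub_mul, div_mul_cancel₀ _ hpos.ne', one_mul] at this
            linarith
          · have := mul_le_mul_of_nonneg_right h1 hpos.le
            rw [div_mul_cancel₀ _ hpos.ne'] at this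
            linarith [hpos.le]
        exact hscal.smul hconv
      exact hHclosed.mem_of_tendsto key
        (Eventually.of_forall fun n => H.zsmul_mem (hwH (φ n)) _)
    -- a is in Vᗮ
    have haorth : a ∈ Vᗮ := by
      exact V.isClosed_orthogonal.mem_of_tendsto hconv
        (Eventually.of_forall fun n => Vᗮ.smul_mem _ (hworth (φ n)))
    have : a = 0 := by
      have h0 : (inner ℝ a a : ℝ) = 0 :=
        ((Submodule.mem_orthogonal V a).mp haorth) a haV
      exact inner_self_eq_zero.mp h0
    rw [mem_sphere_zero_iff_norm] at hasphere
    rw [this, norm_zero] at hasphere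
    norm_num at hasphere
  obtain ⟨ε, hεpos, hεsmall⟩ := step1
  set Pw := orthogonalProjection Vᗮ with hPwdef
  have hPwV : ∀ x ∈ V, Pw x = 0 := fun x hx =>
    Submodule.orthogonalProjectionOnto_apply_of_mem_orthogonal (V.le_orthogonal_orthogonal hx)
  have hVPw : ∀ x : E, Pw x = 0 → x ∈ V := by
    intro x hx
    have : x ∈ Vᗮᗮ := Submodule.orthogonalProjectionOnto_eq_zero_iff.mp hx
    rwa [Submodule.orthogonal_orthogonal] at this
  have hsub : ∀ x : E, x - (orthogonalProjection V x : E) = (Pw x : E) := by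
    intro x
    exact sub_eq_of_eq_add' (Submodule.starProjection_add_starProjection_orthogonal (K := V) x).symm
  set g : Fin k → ↥Vᗮ := fun i => Pw (EuclideanSpace.single i 1) with hg
  set ivec : (Fin k → ℤ) → E := fun c => (WithLp.toLp 2 (fun p => (c p : ℝ)) : E) with hivec
  have hivec_sum : ∀ c : Fin k → ℤ,
      ivec c = ∑ p, ((c p : ℝ)) • EuclideanSpace.single p (1:ℝ) := fun c =>
    esingle_decomp (ivec c)
  have hivecD : ∀ c, ivec c ∈ D := by
    intro c
    refine ⟨0, c, fun j => ?_⟩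
    show (c j : ℝ) = 0 * β j + (c j : ℝ)
    ring
  have hPw_ivec : ∀ c : Fin k → ℤ, Pw (ivec c) = ∑ p, c p • g p := by
    intro c
    rw [hivec_sum c, map_sum]
    simp only [Int.cast_smul_eq_zsmul, map_zsmul]
    rfl
  have hLsmall : ∀ z : ↥Vᗮ, z ∈ Submodule.span ℤ (Set.range g) → ‖z‖ < ε → z = 0 := by
    intro z hz hznorm
    obtain ⟨c, hc⟩ := (mem_span_range_iff_exists_fun ℤ).mp hz
    have hPwc : Pw (ivec c) = z := by rw [hPw_ivec]; exact hc
    have hmemH : ivec c ∈ H := AddSubgroup.le_topologicalClosure D (hivecD c)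
    have hmemV : ivec c ∈ V := by
      apply hεsmall _ hmemH
      rw [hsub, hPwc]
      exact hznorm
    have h0 : Pw (ivec c) = 0 := hPwV _ hmemV
    rw [hPwc] at h0; exact h0
  set L : Submodule ℤ ↥Vᗮ := Submodule.span ℤ (Set.range g) with hL
  have hgL : ∀ i, g i ∈ L := fun i => Submodule.subset_span (Set.mem_range_self i)
  haveI hLdisc : DiscreteTopology ↥L := by
    rw [discreteTopology_iff_isOpen_singleton]
    intro x
    have hxset : ({x} : Set ↥L) = (fun y : ↥L => (y : ↥Vᗮ)) ⁻¹' Metric.ball (x : ↥Vᗮ) ε := by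
      ext y
      simp only [Set.mem_singleton_iff, Set.mem_preimage, Metric.mem_ball]
      constructor
      · rintro rfl; simpa using hεpos
      · intro hy
        have h1 : ((y - x : ↥L) : ↥Vᗮ) = (y : ↥Vᗮ) - (x : ↥Vᗮ) := rfl
        have h2 : ((y - x : ↥L) : ↥Vᗮ) = 0 := by
          apply hLsmall _ (y - x).2
          rw [h1, ← dist_eq_norm]
          exact hy
        rw [h1] at h2
        have := sub_eq_zero.mp h2
        exact Subtype.ext this
    rw [hxset]
    exact Metric.isOpen_ball.preimage continuous_subtype_val
  haveI : IsZLattice ℝ L := by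
    constructor
    rw [eq_top_iff]
    rintro w -
    have hwrep : w = Pw (w : E) := (orthogonalProjection_mem_subspace_eq_self w).symm
    rw [hwrep, esingle_decomp (w : E), map_sum]
    apply Submodule.sum_mem
    intro p _
    rw [map_smul]
    exact Submodule.smul_mem _ _ (Submodule.subset_span (hgL p))
  haveI : ProperSpace ↥Vᗮ := FiniteDimensional.proper ℝ ↥Vᗮ
  haveI : Module.Finite ℤ ↥L := ZLattice.module_finite ℝ L
  haveI : Module.Free ℤ ↥L := ZLattice.module_free ℝ L
  set b₀ : Basis (Module.Free.ChooseBasisIndex ℤ ↥L) ℤ ↥L := Module.Free.chooseBasis ℤ ↥L with hb₀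
  set B : Basis (Module.Free.ChooseBasisIndex ℤ ↥L) ℝ ↥Vᗮ := Basis.ofZLatticeBasis ℝ L b₀ with hB
  have hbase : ∀ j, ∃ a : Fin k → ℤ, ∑ i, a i • g i = ↑(b₀ j) :=
    fun j => (mem_span_range_iff_exists_fun ℤ).mp (b₀ j).2
  choose a ha using hbase
  set mE : _ → E := fun j => ivec (a j) with hmE
  have hPw_mE : ∀ j, Pw (mE j) = ↑(b₀ j) := by
    intro j
    rw [hmE]
    show Pw (ivec (a j)) = _
    rw [hPw_ivec, ha j]
  set c : Fin k → _ → ℤ := fun i j => b₀.repr ⟨g i, hgL i⟩ j with hcdef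
  have hgc : ∀ i, g i = ∑ j, (c i j : ℤ) • ((b₀ j : ↥L) : ↥Vᗮ) := by
    intro i
    have h1 := Basis.sum_repr b₀ ⟨g i, hgL i⟩
    have h2 := congrArg (fun z : ↥L => (z : ↥Vᗮ)) h1
    simp only at h2
    rw [← h2]
    push_cast
    rfl
  set v : Fin k → E := fun i => EuclideanSpace.single i (1:ℝ) - ∑ j, (c i j : ℝ) • mE j with hv
  have hPwv : ∀ i, Pw (v i) = 0 := by
    intro i
    show Pw (EuclideanSpace.single i (1:ℝ) - ∑ j, (c i j : ℝ) • mE j) = 0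
    rw [map_sub, map_sum]
    simp only [Int.cast_smul_eq_zsmul, map_zsmul, hPw_mE]
    rw [← hgc i]
    show g i - g i = 0
    exact sub_self _
  have hvV : ∀ i, v i ∈ V := fun i => hVPw _ (hPwv i)
  have hVdecomp : ∀ x : E, x ∈ V → x = ∑ i, x i • v i := by
    intro x hx
    have hxs : x = ∑ i, x i • EuclideanSpace.single i (1:ℝ) := esingle_decomp x
    have hexp : ∑ i, x i • v i = x - ∑ j, (∑ i, x i * (c i j : ℝ)) • mE j := by
      calc ∑ i, x i • v i
          = ∑ i, (x i • EuclideanSpace.single i (1:ℝ) - ∑ j, (x i * (c i j : ℝ)) • mE j) := by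
            refine Finset.sum_congr rfl fun i _ => ?_
            show x i • (EuclideanSpace.single i (1:ℝ) - ∑ j, (c i j : ℝ) • mE j) = _
            rw [smul_sub, Finset.smul_sum]
            simp only [smul_smul]
        _ = (∑ i, x i • EuclideanSpace.single i (1:ℝ)) - ∑ i, ∑ j, (x i * (c i j : ℝ)) • mE j :=
            Finset.sum_sub_distrib _ _
        _ = x - ∑ j, (∑ i, x i * (c i j : ℝ)) • mE j := by
            rw [← hxs, Finset.sum_comm]
            congr 1
            refine Finset.sum_congr rfl fun j _ => ?_
            rw [Finset.sum_smul]
    have hPx : Pw x = 0 := hPwV x hx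
    have hw0 : ∀ j, (∑ i, x i * (c i j : ℝ)) = 0 := by
      have h3 := congrArg Pw hexp
      rw [map_sum] at h3
      simp only [map_smul, hPwv, smul_zero, Finset.sum_const_zero] at h3
      rw [map_sub, hPx, map_sum] at h3
      simp only [map_smul, hPw_mE] at h3
      rw [zero_sub] at h3
      have h4 : ∑ j, (∑ i, x i * (c i j : ℝ)) • ((b₀ j : ↥L) : ↥Vᗮ) = 0 :=
        neg_eq_zero.mp h3.symm
      have h5 : ∑ j, (∑ i, x i * (c i j : ℝ)) • (B j) = 0 := by
        simp only [hB, Basis.ofZLatticeBasis_apply]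
        exact h4
      have hli := B.linearIndependent
      rw [Fintype.linearIndependent_iff] at hli
      have := hli (fun j => ∑ i, x i * (c i j : ℝ)) ?_
      · exact this
      · simpa only [smul_eq_mul] using h5
    rw [hexp]
    simp only [hw0, zero_smul, Finset.sum_const_zero, sub_zero]
  set Mq : Fin k → Fin k → ℚ :=
    fun i p => (if p = i then 1 else 0) - ∑ j, (c i j : ℚ) * (a j p : ℚ) with hMqdef
  have hvcoord : ∀ i p, v i p = ((Mq i p : ℚ) : ℝ) := by
    intro i p
    have h1 : v i p = EuclideanSpace.single i (1:ℝ) p - (∑ j, (c i j : ℝ) • mE j) p := rfl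
    rw [h1, esum_apply, EuclideanSpace.single_apply]
    have h2 : ∀ j, ((c i j : ℝ) • mE j) p = (c i j : ℝ) * (a j p : ℝ) := fun j => rfl
    simp only [h2, hMqdef]
    rw [Rat.cast_sub, Rat.cast_sum]
    congr 1
    · split <;> simp
    · exact Finset.sum_congr rfl fun j _ => by push_cast; ring
  by_cases hq : ∃ q : Fin k → ℚ, q ≠ 0 ∧ ∀ i, ∑ p, Mq i p * q p = 0
  · exfalso
    obtain ⟨q, hq0, hqM⟩ := hq
    have hβd := hVdecomp _ hβV
    have hrel : ∑ p, (q p : ℝ) * β p = 0 := by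
      have hcoord : ∀ p : Fin k, β p = ∑ i, β i * v i p := by
        intro p
        conv_lhs => rw [show β p = (WithLp.toLp 2 β : E) p from rfl]
        conv_lhs => rw [hβd]
        rw [esum_apply]
        exact Finset.sum_congr rfl fun i _ => rfl
      calc ∑ p, (q p : ℝ) * β p = ∑ p, ∑ i, (q p : ℝ) * (β i * v i p) := by
            refine Finset.sum_congr rfl fun p _ => ?_
            rw [hcoord p, Finset.mul_sum]
        _ = ∑ i, β i * ∑ p, (v i p * (q p : ℝ)) := by
            rw [Finset.sum_comm]
            refine Finset.sum_congr rfl fun i _ => ?_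
            rw [Finset.mul_sum]
            refine Finset.sum_congr rfl fun p _ => ?_
            ring
        _ = 0 := by
            refine Finset.sum_eq_zero fun i _ => ?_
            have : ∑ p, (v i p * (q p : ℝ)) = ((∑ p, Mq i p * q p : ℚ) : ℝ) := by
              push_cast
              exact Finset.sum_congr rfl fun p _ => by rw [hvcoord]
            rw [this, hqM i]
            simp
    have hind := Fintype.linearIndependent_iff.mp hβ q ?_
    · exact hq0 (funext hind)
    · simpa only [Rat.smul_def] using hrel
  · push_neg at hq
    have hdet : (Matrix.of Mq).det ≠ 0 := by
      intro h0
      obtain ⟨q, hq0, hqv⟩ := Matrix.exists_mulVec_eq_zero_iff.mpr h0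
      obtain ⟨i, hi⟩ := hq q hq0
      apply hi
      have := congrFun hqv i
      simpa [Matrix.mulVec, dotProduct] using this
    set Mr : Matrix (Fin k) (Fin k) ℝ := (Matrix.of Mq).map ((↑) : ℚ → ℝ) with hMrdef
    have hdetr : Mr.det ≠ 0 := by
      have h1 : Mr = (Rat.castHom ℝ).mapMatrix (Matrix.of Mq) := rfl
      rw [h1, ← RingHom.map_det]
      simp only [Rat.coe_castHom, ne_eq, Rat.cast_eq_zero]
      exact hdet
    have hMrv : ∀ i p, Mr i p = v i p := by
      intro i p
      rw [hvcoord]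
      rfl
    have hsingleV : ∀ p, EuclideanSpace.single p (1:ℝ) ∈ V := by
      intro p
      set uu : Fin k → ℝ := Matrix.vecMul (Pi.single p 1) Mr⁻¹ with huu
      have hkey : EuclideanSpace.single p (1:ℝ) = ∑ i, uu i • v i := by
        ext p'
        rw [esum_apply]
        have h2 : ∀ i, (uu i • v i) p' = uu i * Mr i p' := fun i => by
          rw [PiLp.smul_apply, smul_eq_mul, hMrv]
        simp only [h2]
        have h3 : ∑ i, uu i * Mr i p' = Matrix.vecMul uu Mr p' := by
          simp [Matrix.vecMul, dotProduct]
        rw [h3, huu, Matrix.vecMul_vecMul,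
          Matrix.nonsing_inv_mul Mr (isUnit_iff_ne_zero.mpr hdetr), Matrix.vecMul_one,
          EuclideanSpace.single_apply, Pi.single_apply]
      rw [hkey]
      exact Submodule.sum_mem _ fun i _ => V.smul_mem _ (hvV i)
    intro x
    have hxs := esingle_decomp x
    rw [hxs]
    exact Submodule.sum_mem _ fun p _ => V.smul_mem _ (hsingleV p)
private lemma dense_approx {β : Fin k → ℝ} (hβ : LinearIndependent ℚ β)
    (s : Fin k → ℝ) {ε : ℝ} (hε : 0 < ε) :
    ∃ (t : ℝ) (c : Fin k → ℤ), ∀ j, |t * β j + (c j : ℝ) - s j| < ε := by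
  have hd := dense_lineLatt hβ
  have hmem := hd (WithLp.toLp 2 s : EuclideanSpace ℝ (Fin k))
  rw [Metric.mem_closure_iff] at hmem
  obtain ⟨y, hyD, hdist⟩ := hmem ε hε
  obtain ⟨t, c, hy⟩ : ∃ (t : ℝ) (c : Fin k → ℤ), ∀ j, y j = t * β j + (c j : ℝ) := hyD
  refine ⟨t, c, fun j => ?_⟩
  have h1 := coord_dist_le (WithLp.toLp 2 s : EuclideanSpace ℝ (Fin k)) y j
  rw [Real.dist_eq] at h1
  have h2 : |t * β j + (c j : ℝ) - s j| = |s j - y j| := by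
    rw [← hy j, abs_sub_comm]
  rw [h2]
  calc |s j - y j| ≤ dist (WithLp.toLp 2 s : EuclideanSpace ℝ (Fin k)) y := h1
    _ < ε := hdist

private lemma dense_large {β : Fin k → ℝ} (hβ : LinearIndependent ℚ β)
    (s : Fin k → ℝ) {ε : ℝ} (hε : 0 < ε) (T : ℝ) :
    ∃ (t : ℝ) (c : Fin k → ℤ), T ≤ |t| ∧ ∀ j, |t * β j + (c j : ℝ) - s j| < ε := by
  obtain ⟨t₀, c₀, h₀⟩ := dense_approx hβ s (half_pos hε)
  obtain ⟨τ, c₁, hτT, hτ⟩ := recurrence β (T + |t₀|) (half_pos hε)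
  refine ⟨t₀ + τ, c₀ + c₁, ?_, fun j => ?_⟩
  · have h2 : |τ| ≤ |t₀ + τ| + |t₀| := by
      calc |τ| = |(t₀ + τ) + (-t₀)| := by congr 1; ring
        _ ≤ |t₀ + τ| + |(-t₀)| := abs_add_le _ _
        _ = |t₀ + τ| + |t₀| := by rw [abs_neg]
    have h3 : τ ≤ |τ| := le_abs_self τ
    linarith
  · have heq : (t₀ + τ) * β j + ((c₀ + c₁) j : ℝ) - s j =
        (t₀ * β j + (c₀ j : ℝ) - s j) + (τ * β j + (c₁ j : ℝ)) := by
      push_cast [Pi.add_apply]; ring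
    rw [heq]
    calc |_ + _| ≤ |t₀ * β j + (c₀ j : ℝ) - s j| + |τ * β j + (c₁ j : ℝ)| := abs_add_le _ _
      _ < ε / 2 + ε / 2 := add_lt_add (h₀ j) (hτ j)
      _ = ε := by ring
private lemma addCircle_eq_of_sub_int {x y : ℝ} (z : ℤ) (h : x - y = z) :
    (x : AddCircle (1 : ℝ)) = (y : AddCircle (1 : ℝ)) := by
  apply (QuotientAddGroup.eq (s := AddSubgroup.zmultiples (1 : ℝ))).mpr
  refine AddSubgroup.mem_zmultiples_iff.mpr ⟨-z, ?_⟩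
  have : (-z : ℤ) • (1 : ℝ) = -(z : ℝ) := by simp
  rw [this, ← h]; ring

end TorusWindingAux

open Filter Topology TorusWindingAux in
/-- Winding lemma (consequence of Ratner's theorem): with `α₁,…,α_d` nonzero reals,
`α₁,…,α_k` a ℚ-basis of their ℚ-span and `Q ∈ ℚ^{d×k}` the coefficient matrix,
there is an open set `C ∋ 0` in `ℝ^k` such that for every `s ∈ C` there are sequences
`t^n ∈ ℝ` and `r^n ∈ C` with `(α t^n) + ℤ^d = Q·(α₁ r^n_1, …, α_k r^n_k) + ℤ^d`,
`|t^n| → ∞`, and `r^n → s`. -/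
theorem torus_winding_sequences (d k : ℕ) (hk : k ≤ d) (α : Fin d → ℝ)
    (hα : ∀ p, α p ≠ 0)
    (Q : Fin d → Fin k → ℚ)
    (hbasis : LinearIndependent ℚ (fun j : Fin k => α (Fin.castLE hk j)))
    (hQ : ∀ p, α p = ∑ j, (Q p j : ℝ) * α (Fin.castLE hk j)) :
    ∃ C : Set (Fin k → ℝ), IsOpen C ∧ (0 : Fin k → ℝ) ∈ C ∧
      ∀ s ∈ C, ∃ (t : ℕ → ℝ) (r : ℕ → Fin k → ℝ),
        (∀ n, r n ∈ C) ∧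
        (∀ n p, ((α p * t n : ℝ) : AddCircle (1 : ℝ)) =
          ((∑ j, (Q p j : ℝ) * (α (Fin.castLE hk j) * r n j) : ℝ) : AddCircle (1 : ℝ))) ∧
        Filter.Tendsto (fun n => |t n|) Filter.atTop Filter.atTop ∧
        Filter.Tendsto r Filter.atTop (nhds s) := by
  classical
  set αk : Fin k → ℝ := fun j => α (Fin.castLE hk j) with hαk
  have hαk0 : ∀ j, αk j ≠ 0 := fun j => hα _
  set N : ℕ := ∏ p, ∏ j, (Q p j).den with hN
  have hN0 : 0 < N := Finset.prod_pos fun p _ => Finset.prod_pos fun j _ => (Q p j).den_pos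
  have hNR : (0 : ℝ) < N := by exact_mod_cast hN0
  have hNQ : ∀ p j, ∃ z : ℤ, ((N : ℚ)) * Q p j = (z : ℚ) := by
    intro p j
    have hdvd : (Q p j).den ∣ N :=
      dvd_trans (Finset.dvd_prod_of_mem (fun j => (Q p j).den) (Finset.mem_univ j))
        (Finset.dvd_prod_of_mem (fun p => ∏ j, (Q p j).den) (Finset.mem_univ p))
    obtain ⟨M, hM⟩ := hdvd
    refine ⟨(Q p j).num * M, ?_⟩
    rw [hM]
    push_cast
    rw [mul_comm ((Q p j).den : ℚ) (M : ℚ), mul_assoc, mul_comm ((Q p j).den : ℚ) (Q p j),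
      Rat.mul_den_eq_num]
    ring
  set β : Fin k → ℝ := fun j => -(αk j) / N with hβdef
  have hβ : LinearIndependent ℚ β := by
    rw [Fintype.linearIndependent_iff] at hbasis ⊢
    intro q hq j
    have h1 : ∑ i, (q i * (-1 / N) : ℚ) • αk i = 0 := by
      rw [← hq]
      refine Finset.sum_congr rfl fun i _ => ?_
      rw [Rat.smul_def, Rat.smul_def]
      have hb : β i = -(αk i) / N := rfl
      rw [hb]
      push_cast
      field_simp
    have h2 := hbasis _ h1 j
    have h3 : (-1 / N : ℚ) ≠ 0 := by
      apply div_ne_zero (by norm_num)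
      exact_mod_cast hN0.ne'
    exact (mul_eq_zero.mp h2).resolve_right h3
  set m : ℝ := (∏ j, max 1 |αk j|⁻¹)⁻¹ with hm
  have hprodpos : 0 < ∏ j, max 1 |αk j|⁻¹ :=
    Finset.prod_pos fun j _ => lt_of_lt_of_le one_pos (le_max_left _ _)
  have hm0 : 0 < m := inv_pos.mpr hprodpos
  have hmle : ∀ j, m ≤ |αk j| := by
    intro j
    have hrest : (1 : ℝ) ≤ ∏ i ∈ Finset.univ.erase j, max 1 |αk i|⁻¹ :=
      le_trans (le_of_eq (Finset.prod_const_one).symm)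
        (Finset.prod_le_prod (fun i _ => zero_le_one) (fun i _ => le_max_left _ _))
    have h1 : |αk j|⁻¹ ≤ ∏ i, max 1 |αk i|⁻¹ := by
      rw [← Finset.mul_prod_erase Finset.univ (fun i => max 1 |αk i|⁻¹) (Finset.mem_univ j)]
      calc |αk j|⁻¹ = |αk j|⁻¹ * 1 := (mul_one _).symm
        _ ≤ (max 1 |αk j|⁻¹) * ∏ i ∈ Finset.univ.erase j, max 1 |αk i|⁻¹ :=
          mul_le_mul (le_max_right _ _) hrest zero_le_one
            (le_trans zero_le_one (le_max_left _ _))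
    have h2 := inv_anti₀ (inv_pos.mpr (abs_pos.mpr (hαk0 j))) h1
    rwa [inv_inv] at h2
  refine ⟨Set.univ, isOpen_univ, Set.mem_univ _, ?_⟩
  intro s _
  have key : ∀ n : ℕ, ∃ (t : ℝ) (r : Fin k → ℝ), (n : ℝ) ≤ |t| ∧
      (∀ j, |r j - s j| < 1 / (n + 1)) ∧
      (∀ j, ∃ z : ℤ, αk j * t - αk j * r j = (N : ℝ) * z) := by
    intro n
    have hεn : (0 : ℝ) < m / (N * (n + 1)) := by positivity
    obtain ⟨t, c, hT, hc⟩ := dense_large hβ (fun j => -(αk j) * s j / N) hεn n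
    refine ⟨t, fun j => t - ((N : ℝ) * c j) / αk j, hT, ?_, ?_⟩
    · intro j
      have h1 := hc j
      have hαpos : 0 < |αk j| := abs_pos.mpr (hαk0 j)
      have heq : t * β j + (c j : ℝ) - (-(αk j) * s j / N) =
          -(αk j / N) * ((t - ((N : ℝ) * c j) / αk j) - s j) := by
        have hb : β j = -(αk j) / N := rfl
        rw [hb]
        field_simp [hαk0 j]
        ring
      rw [heq, abs_mul, abs_neg, abs_div, abs_of_pos hNR] at h1
      set R := |t - ((N : ℝ) * c j) / αk j - s j| with hR
      have h3 : R < m / (N * (n + 1)) * ((N : ℝ) / |αk j|) := by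
        have h4 := mul_lt_mul_of_pos_left h1 (by positivity : (0:ℝ) < (N : ℝ) / |αk j|)
        calc R = (N : ℝ) / |αk j| * (|αk j| / N * R) := by field_simp
          _ < (N : ℝ) / |αk j| * (m / (N * (n + 1))) := h4
          _ = m / (N * (n + 1)) * ((N : ℝ) / |αk j|) := by ring
      have h5 : m / (N * (n + 1)) * ((N : ℝ) / |αk j|) = m / (|αk j| * (n + 1)) := by
        field_simp
      have h6 : m / (|αk j| * (n + 1)) ≤ 1 / ((n : ℝ) + 1) := by
        rw [div_le_div_iff₀ (by positivity) (by positivity)]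
        nlinarith [hmle j, hαpos]
      rw [h5] at h3
      linarith
    · intro j
      refine ⟨c j, ?_⟩
      field_simp [hαk0 j]
      ring
  choose t r ht hr hz using key
  refine ⟨t, r, fun n => Set.mem_univ _, ?_, ?_, ?_⟩
  · intro n p
    choose z hzeq using hz n
    choose ZQ hZQ using fun j => hNQ p j
    apply addCircle_eq_of_sub_int (∑ j, ZQ j * z j)
    have hQp := hQ p
    calc α p * t n - ∑ j, (Q p j : ℝ) * (αk j * r n j)
        = ∑ j, (Q p j : ℝ) * (αk j * t n - αk j * r n j) := by
          rw [hQp, Finset.sum_mul, ← Finset.sum_sub_distrib]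
          refine Finset.sum_congr rfl fun j _ => ?_
          ring
      _ = ∑ j, (Q p j : ℝ) * ((N : ℝ) * z j) := by
          refine Finset.sum_congr rfl fun j _ => by rw [hzeq j]
      _ = ((∑ j, ZQ j * z j : ℤ) : ℝ) := by
          push_cast
          refine Finset.sum_congr rfl fun j _ => ?_
          have hcast : ((N : ℝ)) * (Q p j : ℝ) = ((ZQ j : ℤ) : ℝ) := by
            exact_mod_cast congrArg (fun q : ℚ => (q : ℝ)) (hZQ j)
          rw [← hcast]
          ring
  · exact tendsto_atTop_mono ht tendsto_natCast_atTop_atTop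
  · rw [tendsto_pi_nhds]
    intro j
    rw [tendsto_iff_dist_tendsto_zero]
    apply squeeze_zero (fun n => dist_nonneg) (g := fun n : ℕ => 1 / ((n : ℝ) + 1))
    · intro n
      rw [Real.dist_eq]
      exact (hr n j).le
    · exact tendsto_one_div_add_atTop_nhds_zero_nat
end

section
/- Let N = (V, E, {v_in}, V_out, Ω, Θ) be a general feed-forward neural network with a single input node, and let σ be a meromorphic function on ℂ whose set of poles P satisfies P ⊂ ℂ \ ℝ and σ(ℝ) ⊂ ℝ. Then for every node u ∈ V, the natural domain of the map realized by u under σ equals ℂ \ E_u for some closed countable set E_u ⊂ ℂ \ ℝ; in particular, the natural domain is an open connected set containing ℝ. -/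
open Filter

/-- A general feed-forward neural network with a single input node `vin`: a finite DAG
(acyclicity via well-foundedness of the edge relation `Adj`, where `Adj u v` means a directed
edge from `u` to `v`), real weights and biases.  The conditions that `vin` is the unique
source and that weights on edges are nonzero are imposed as hypotheses. -/
structure CNet where
  V : Type
  [instFintype : Fintype V]
  Adj : V → V → Prop
  wf : WellFounded Adj
  vin : V
  out : Set V
  wt : V → V → ℝ
  bias : V → ℝ

attribute [instance] CNet.instFintype

/-- The natural domain and holomorphic output map of each node of a single-input network,
for a nonlinearity `σ` holomorphic on `ℂ \ P`: the input node has domain `ℂ` and realizes the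
identity; a non-input node `v` has domain
`{z ∈ ⋂_{u ∈ par(v)} D_{u^σ} : Σ_u ω_{vu} u^σ(z) + θ_v ∉ P}` and realizes
`z ↦ σ(Σ_u ω_{vu} u^σ(z) + θ_v)`. -/
noncomputable def CNet.nodeData (N : CNet) (σ : ℂ → ℂ) (P : Set ℂ) :
    N.V → Set ℂ × (ℂ → ℂ) :=
  N.wf.fix (C := fun _ => Set ℂ × (ℂ → ℂ)) fun v rec =>
    letI : ∀ a b : N.V, Decidable (N.Adj a b) := fun _ _ => Classical.propDecidable _
    letI : Decidable (∀ u, ¬ N.Adj u v) := Classical.propDecidable _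
    if ∀ u, ¬ N.Adj u v then (Set.univ, fun z => z)
    else
      ({z : ℂ | (∀ u, ∀ hu : N.Adj u v, z ∈ (rec u hu).1) ∧
          (∑ u : N.V, if hu : N.Adj u v then (N.wt v u : ℂ) * (rec u hu).2 z else 0)
            + (N.bias v : ℂ) ∉ P},
       fun z => σ ((∑ u : N.V, if hu : N.Adj u v then (N.wt v u : ℂ) * (rec u hu).2 z else 0)
            + (N.bias v : ℂ)))


/-- A set all of whose points are isolated (within the set) is countable in `ℂ`. -/
lemma countable_of_isolated' {s : Set ℂ}
    (h : ∀ x ∈ s, ∃ ε > 0, ∀ y ∈ s, dist y x < ε → y = x) : s.Countable := by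
  choose! ε hε hsep using h
  have hd : s.PairwiseDisjoint (fun x => Metric.ball x (ε x / 2)) := by
    intro x hx y hy hxy
    simp only [Function.onFun, Set.disjoint_left]
    intro z hzx hzy
    simp only [Metric.mem_ball] at hzx hzy
    have hdxy : dist x y < ε x / 2 + ε y / 2 := by
      calc dist x y ≤ dist x z + dist z y := dist_triangle _ _ _
        _ = dist z x + dist z y := by rw [dist_comm x z]
        _ < _ := by linarith
    rcases le_total (ε x) (ε y) with hle | hle
    · exact hxy (hsep y hy x hx (by have := dist_comm x y; linarith))
    · exact hxy ((hsep x hx y hy (by have := dist_comm x y; linarith)).symm)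
  exact hd.countable_of_isOpen (fun x _ => Metric.isOpen_ball)
    (fun x hx => ⟨x, Metric.mem_ball_self (by linarith [hε x hx])⟩)

/-- Unfolding lemma for `CNet.nodeData`. -/
lemma CNet.nodeData_eq (N : CNet) (σ : ℂ → ℂ) (P : Set ℂ) (v : N.V) :
    N.nodeData σ P v =
      letI : ∀ a b : N.V, Decidable (N.Adj a b) := fun _ _ => Classical.propDecidable _
      letI : Decidable (∀ u, ¬ N.Adj u v) := Classical.propDecidable _
      if ∀ u, ¬ N.Adj u v then (Set.univ, fun z => z)
      else
        ({z : ℂ | (∀ u, ∀ _hu : N.Adj u v, z ∈ (N.nodeData σ P u).1) ∧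
            (∑ u : N.V, if hu : N.Adj u v then (N.wt v u : ℂ) * (N.nodeData σ P u).2 z else 0)
              + (N.bias v : ℂ) ∉ P},
         fun z => σ ((∑ u : N.V, if hu : N.Adj u v then
              (N.wt v u : ℂ) * (N.nodeData σ P u).2 z else 0)
              + (N.bias v : ℂ))) :=
  N.wf.fix_eq _ v

/-- For a single-input GFNN and a meromorphic nonlinearity `σ` on `ℂ` whose set of poles `P`
lies in `ℂ \ ℝ` and with `σ(ℝ) ⊆ ℝ`, the natural domain of the map realized by every node is
the complement of a closed countable subset of `ℂ \ ℝ`; in particular it is an open connected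
set containing `ℝ`. -/
theorem natural_domain_connected (N : CNet)
    (hsrc : ∀ v : N.V, (∀ u, ¬ N.Adj u v) ↔ v = N.vin)
    (hwt : ∀ u v, N.Adj u v → N.wt v u ≠ 0)
    (σ : ℂ → ℂ) (P : Set ℂ)
    (hP_im : ∀ z ∈ P, z.im ≠ 0)
    (hP_closed : IsClosed P)
    (hP_disc : ∀ z ∈ P, ∃ ε > 0, ∀ z' ∈ P, ‖z' - z‖ < ε → z' = z)
    (hσ : DifferentiableOn ℂ σ Pᶜ)
    (hσ_real : ∀ x : ℝ, (σ (x : ℂ)).im = 0)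
    (hσ_pole : ∀ p ∈ P, Tendsto (fun z => ‖σ z‖) (nhdsWithin p Pᶜ) atTop) :
    ∀ u : N.V, ∃ E : Set ℂ,
      (N.nodeData σ P u).1 = Eᶜ ∧ IsClosed E ∧ E.Countable ∧ (∀ z ∈ E, z.im ≠ 0) ∧
      IsOpen (N.nodeData σ P u).1 ∧ IsConnected (N.nodeData σ P u).1 ∧
      ∀ x : ℝ, (x : ℂ) ∈ (N.nodeData σ P u).1 := by
  have rank2 : (1 : Cardinal) < Module.rank ℝ ℂ := by
    rw [Complex.rank_real_complex]; norm_num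
  have key : ∀ v : N.V, ∃ E : Set ℂ,
      (N.nodeData σ P v).1 = Eᶜ ∧ IsClosed E ∧ E.Countable ∧ (∀ z ∈ E, z.im ≠ 0) ∧
      DifferentiableOn ℂ (N.nodeData σ P v).2 (N.nodeData σ P v).1 ∧
      ∀ x : ℝ, ((N.nodeData σ P v).2 x).im = 0 := by
    intro v
    induction v using N.wf.induction with
    | _ v ih =>
    by_cases hv : ∀ u, ¬ N.Adj u v
    · refine ⟨∅, ?_⟩
      rw [N.nodeData_eq σ P v]
      simp only [if_pos hv]
      refine ⟨Set.compl_empty.symm, isClosed_empty, Set.countable_empty,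
        fun z hz => absurd hz (Set.notMem_empty z), differentiableOn_id,
        fun x => Complex.ofReal_im x⟩
    · classical
      choose Efn hEeq hEclosed hEcnt hEim hEdiff hEreal using
        fun u (hu : N.Adj u v) => ih u hu
      set g : ℂ → ℂ := fun z =>
        (∑ u : N.V, if hu : N.Adj u v then (N.wt v u : ℂ) * (N.nodeData σ P u).2 z else 0)
          + (N.bias v : ℂ) with hgdef
      set E₀ : Set ℂ := ⋃ u : N.V, if hu : N.Adj u v then Efn u hu else ∅ with hE₀def
      have hE₀cnt : E₀.Countable := by
        refine Set.countable_iUnion fun u => ?_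
        split_ifs with hu
        · exact hEcnt u hu
        · exact Set.countable_empty
      have hE₀closed : IsClosed E₀ := by
        refine isClosed_iUnion_of_finite fun u => ?_
        split_ifs with hu
        · exact hEclosed u hu
        · exact isClosed_empty
      have hE₀im : ∀ z ∈ E₀, z.im ≠ 0 := by
        intro z hz
        obtain ⟨u, hz⟩ := Set.mem_iUnion.1 hz
        by_cases hu : N.Adj u v
        · rw [dif_pos hu] at hz; exact hEim u hu z hz
        · rw [dif_neg hu] at hz; exact absurd hz (Set.notMem_empty z)
      have hsubE : ∀ u (hu : N.Adj u v), Efn u hu ⊆ E₀ := by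
        intro u hu z hz
        refine Set.mem_iUnion.2 ⟨u, ?_⟩
        rw [dif_pos hu]; exact hz
      have hmem : ∀ z : ℂ, (∀ u, ∀ hu : N.Adj u v, z ∈ (N.nodeData σ P u).1) ↔ z ∈ E₀ᶜ := by
        intro z
        simp only [Set.mem_compl_iff, hE₀def, Set.mem_iUnion, not_exists]
        constructor
        · intro h u
          split_ifs with hu
          · have := h u hu; rw [hEeq u hu] at this; exact this
          · exact Set.notMem_empty z
        · intro h u hu
          rw [hEeq u hu]
          have := h u; rw [dif_pos hu] at this; exact this
      have hE₀open : IsOpen E₀ᶜ := hE₀closed.isOpen_compl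
      have hgdiff : DifferentiableOn ℂ g E₀ᶜ := by
        refine DifferentiableOn.add_const (c := (N.bias v : ℂ)) ?_
        refine DifferentiableOn.fun_sum fun u _ => ?_
        split_ifs with hu
        · refine (differentiableOn_const _).mul ((hEdiff u hu).mono ?_)
          rw [hEeq u hu]
          exact Set.compl_subset_compl.2 (hsubE u hu)
        · exact differentiableOn_const 0
      have hgreal : ∀ x : ℝ, (g x).im = 0 := by
        intro x
        simp only [hgdef, Complex.add_im, Complex.ofReal_im, add_zero]
        rw [Complex.im_sum]
        refine Finset.sum_eq_zero fun u _ => ?_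
        split_ifs with hu
        · rw [Complex.mul_im, Complex.ofReal_im, Complex.ofReal_re, hEreal u hu x]
          ring
        · simp
      have hganal : AnalyticOnNhd ℂ g E₀ᶜ := hgdiff.analyticOnNhd hE₀open
      have hconn : IsPreconnected (E₀ᶜ : Set ℂ) :=
        (hE₀cnt.isConnected_compl_of_one_lt_rank rank2).isPreconnected
      have h0 : (0 : ℂ) ∈ E₀ᶜ := fun h => hE₀im 0 h rfl
      have hg0 : g 0 ∉ P := by
        intro hp
        have := hgreal 0
        rw [Complex.ofReal_zero] at this
        exact hP_im _ hp this
      set S : Set ℂ := {z | z ∈ E₀ᶜ ∧ g z ∈ P} with hSdef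
      have hScnt : S.Countable := by
        refine countable_of_isolated' fun z0 hz0 => ?_
        obtain ⟨hz0c, hz0P⟩ := hz0
        have han : AnalyticAt ℂ g z0 := hganal z0 hz0c
        rcases han.eventually_eq_or_eventually_ne
            (analyticAt_const : AnalyticAt ℂ (fun _ => g z0) z0) with heq | hne
        · exfalso
          have := hganal.eqOn_of_preconnected_of_eventuallyEq
            (fun z _ => analyticAt_const) hconn hz0c heq h0
          exact hg0 (this ▸ hz0P)
        · obtain ⟨ε, hε, hsep⟩ := hP_disc (g z0) hz0P
          have h1 : ∀ᶠ z in nhds z0, ‖g z - g z0‖ < ε := by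
            have := han.continuousAt.tendsto (Metric.ball_mem_nhds (g z0) hε)
            filter_upwards [this] with z hz
            simpa [Metric.mem_ball, Complex.dist_eq] using hz
          have h2 : ∀ᶠ z in nhdsWithin z0 {z0}ᶜ,
              g z ≠ g z0 ∧ ‖g z - g z0‖ < ε :=
            hne.and (h1.filter_mono nhdsWithin_le_nhds)
          rw [Metric.nhdsWithin_basis_ball.eventually_iff] at h2
          obtain ⟨δ, hδ, h2⟩ := h2
          refine ⟨δ, hδ, fun y hy hdist => ?_⟩
          by_contra hne'
          have hyball : y ∈ Metric.ball z0 δ ∩ {z0}ᶜ :=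
            ⟨Metric.mem_ball.2 hdist, hne'⟩
          have h3 := h2 hyball
          exact h3.1 (hsep (g y) hy.2 h3.2)
      have hSim : ∀ z ∈ S, z.im ≠ 0 := by
        intro z hz him
        have hzre : z = ((z.re : ℝ) : ℂ) := Complex.ext rfl (by simp [him])
        have : (g z).im = 0 := by rw [hzre]; exact hgreal z.re
        exact hP_im _ hz.2 this
      have hD1 : (N.nodeData σ P v).1 =
          {z : ℂ | (∀ u, ∀ _hu : N.Adj u v, z ∈ (N.nodeData σ P u).1) ∧ g z ∉ P} := by
        rw [N.nodeData_eq σ P v, if_neg hv]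
      have hD2 : (N.nodeData σ P v).2 = fun z => σ (g z) := by
        rw [N.nodeData_eq σ P v, if_neg hv]
      have hDeq : (N.nodeData σ P v).1 = (E₀ ∪ S)ᶜ := by
        rw [hD1]
        ext z
        simp only [Set.mem_setOf_eq, hmem z, Set.mem_compl_iff, Set.mem_union, hSdef,
          Set.mem_compl_iff]
        tauto
      have hDeq' : (N.nodeData σ P v).1 = E₀ᶜ ∩ g ⁻¹' Pᶜ := by
        rw [hD1]
        ext z
        simp only [Set.mem_setOf_eq, hmem z, Set.mem_inter_iff, Set.mem_preimage,
          Set.mem_compl_iff]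
      have hDopen : IsOpen (N.nodeData σ P v).1 := by
        rw [hDeq']
        exact hgdiff.continuousOn.isOpen_inter_preimage hE₀open hP_closed.isOpen_compl
      have hDsub : (N.nodeData σ P v).1 ⊆ E₀ᶜ := by
        rw [hDeq']; exact Set.inter_subset_left
      refine ⟨E₀ ∪ S, hDeq, ?_, hE₀cnt.union hScnt, ?_, ?_, ?_⟩
      · rw [← isOpen_compl_iff, ← hDeq]; exact hDopen
      · intro z hz
        rcases hz with hz | hz
        · exact hE₀im z hz
        · exact hSim z hz
      · rw [hD2]
        refine hσ.comp (hgdiff.mono hDsub) ?_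
        intro z hz
        rw [hDeq'] at hz
        exact hz.2
      · intro x
        have h := hgreal x
        have hgx : g (x : ℂ) = (((g (x : ℂ)).re : ℝ) : ℂ) := Complex.ext rfl (by simp [h])
        rw [hD2]
        show (σ (g (x : ℂ))).im = 0
        rw [hgx]
        exact hσ_real _
  intro u
  obtain ⟨E, h1, h2, h3, h4, _, _⟩ := key u
  refine ⟨E, h1, h2, h3, h4, ?_, ?_, ?_⟩
  · rw [h1]; exact h2.isOpen_compl
  · rw [h1]; exact h3.isConnected_compl_of_one_lt_rank rank2
  · intro x
    rw [h1]
    intro hx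
    exact h4 _ hx (Complex.ofReal_im x)
end

section
/- Let ρ be piecewise C¹ with ρ' ∈ BV(ℝ) ∩ L¹(ℝ). For every ε > 0, there exist a discrete self-avoiding set S ⊂ ℝ, a sequence (c_s)_{s∈S} ∈ ℓ¹(S) of nonzero reals, and reals α > 0 and C, such that σ = C + Σ_{s∈S} c_s tanh(α(· − s)) satisfies ‖σ − ρ‖_{L^∞(ℝ)} < ε. -/
open MeasureTheory

lemma tanh_formula (u : ℝ) : Real.tanh u = 1 - 2 / (Real.exp (2*u) + 1) := by
  have h1 : Real.exp u > 0 := Real.exp_pos u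
  have h2 : Real.exp (2*u) = Real.exp u * Real.exp u := by
    rw [← Real.exp_add]; ring_nf
  have hc : 0 < Real.cosh u := Real.cosh_pos u
  rw [Real.tanh_eq_sinh_div_cosh, Real.sinh_eq, Real.cosh_eq]
  have h3 : Real.exp (-u) = (Real.exp u)⁻¹ := Real.exp_neg u
  rw [h2, h3]
  field_simp
  ring_nf

lemma abs_tanh_le_one (u : ℝ) : |Real.tanh u| ≤ 1 := by
  rw [tanh_formula]
  have h : 0 < Real.exp (2*u) + 1 := by positivity
  have h2 : Real.exp (2*u) + 1 ≥ 1 := by nlinarith [Real.exp_pos (2*u)]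
  rw [abs_le]
  constructor
  · have : 2 / (Real.exp (2*u) + 1) ≤ 2 := by
      rw [div_le_iff₀ h]; nlinarith
    linarith
  · have : 0 < 2 / (Real.exp (2*u) + 1) := by positivity
    linarith

lemma one_sub_tanh_le (u : ℝ) : 1 - Real.tanh u ≤ 2 * Real.exp (-(2*u)) := by
  rw [tanh_formula]
  have h : 0 < Real.exp (2*u) := Real.exp_pos _
  have h3 : Real.exp (-(2*u)) = (Real.exp (2*u))⁻¹ := Real.exp_neg _
  rw [h3]
  have : 2 / (Real.exp (2*u) + 1) ≤ 2 / Real.exp (2*u) := by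
    apply div_le_div_of_nonneg_left (by norm_num) h (by linarith)
  calc 1 - (1 - 2/(Real.exp (2*u)+1)) = 2/(Real.exp (2*u)+1) := by ring
  _ ≤ 2 / Real.exp (2*u) := this
  _ = 2 * (Real.exp (2*u))⁻¹ := by rw [div_eq_mul_inv]

lemma ftc_aux (ρ g : ℝ → ℝ) (D : Set ℝ)
    (hDlocfin : ∀ K : Set ℝ, IsCompact K → (K ∩ D).Finite)
    (hρcont : Continuous ρ)
    (hderiv : ∀ x ∉ D, HasDerivAt ρ (g x) x)
    (hg_int : Integrable g) :
    ∀ a b : ℝ, a ≤ b → ∫ y in a..b, g y = ρ b - ρ a := by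
  have hfin : ∀ a b : ℝ, (D ∩ Set.Ioo a b).Finite := fun a b =>
    (hDlocfin (Set.Icc a b) isCompact_Icc).subset
      (fun x hx => ⟨Set.Ioo_subset_Icc_self hx.2, hx.1⟩)
  suffices H : ∀ N : ℕ, ∀ a b : ℝ, a ≤ b → (D ∩ Set.Ioo a b).ncard ≤ N →
      ∫ y in a..b, g y = ρ b - ρ a by
    intro a b hab; exact H _ a b hab le_rfl
  intro N
  induction N with
  | zero =>
    intro a b hab hcard
    have hempty : D ∩ Set.Ioo a b = ∅ :=
      (Set.ncard_eq_zero (hfin a b)).mp (Nat.le_zero.mp hcard)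
    refine intervalIntegral.integral_eq_sub_of_hasDeriv_right_of_le hab
      hρcont.continuousOn (fun x hx => ?_) hg_int.intervalIntegrable
    have hxD : x ∉ D := fun hD => by
      have : x ∈ D ∩ Set.Ioo a b := ⟨hD, hx⟩
      rw [hempty] at this; exact this
    exact (hderiv x hxD).hasDerivWithinAt
  | succ N ih =>
    intro a b hab hcard
    rcases (D ∩ Set.Ioo a b).eq_empty_or_nonempty with he | ⟨d, hd⟩
    · exact ih a b hab (by simp [he])
    · have hd2 : a < d ∧ d < b := hd.2
      have hsub1 : D ∩ Set.Ioo a d ⊆ (D ∩ Set.Ioo a b) \ {d} := by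
        intro x hx
        refine ⟨⟨hx.1, hx.2.1, hx.2.2.trans hd2.2⟩, ?_⟩
        intro hxd; rw [Set.mem_singleton_iff] at hxd; subst hxd
        exact lt_irrefl x hx.2.2
      have hsub2 : D ∩ Set.Ioo d b ⊆ (D ∩ Set.Ioo a b) \ {d} := by
        intro x hx
        refine ⟨⟨hx.1, hd2.1.trans hx.2.1, hx.2.2⟩, ?_⟩
        intro hxd; rw [Set.mem_singleton_iff] at hxd; subst hxd
        exact lt_irrefl x hx.2.1
      have hpos : 0 < (D ∩ Set.Ioo a b).ncard :=
        (Set.ncard_pos (hfin a b)).mpr ⟨d, hd⟩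
      have hdcard : ((D ∩ Set.Ioo a b) \ {d}).ncard = (D ∩ Set.Ioo a b).ncard - 1 :=
        Set.ncard_diff_singleton_of_mem hd
      have hNle : ((D ∩ Set.Ioo a b) \ {d}).ncard ≤ N := by omega
      have h1 := ih a d hd2.1.le
        (le_trans (Set.ncard_le_ncard hsub1 ((hfin a b).diff)) hNle)
      have h2 := ih d b hd2.2.le
        (le_trans (Set.ncard_le_ncard hsub2 ((hfin a b).diff)) hNle)
      rw [← intervalIntegral.integral_add_adjacent_intervals
        (hg_int.intervalIntegrable) (hg_int.intervalIntegrable), h1, h2]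
      ring

lemma odd_ne_zero {ω : ℤ} (h : Odd ω) : ω ≠ 0 := by
  rcases h with ⟨k, hk⟩; omega

lemma slices_finite {A : Set (ℕ × ℕ)} (B : ℕ)
    (hmin : ∀ q ∈ A, min q.1 q.2 ≤ B)
    (hrow : ∀ a : ℕ, {b | (a, b) ∈ A}.Subsingleton)
    (hcol : ∀ b : ℕ, {a | (a, b) ∈ A}.Subsingleton) : A.Finite := by
  have hsub : A ⊆ (⋃ a ∈ Set.Iic B, (fun b => (a, b)) '' {b | (a, b) ∈ A}) ∪
      (⋃ b ∈ Set.Iic B, (fun a => (a, b)) '' {a | (a, b) ∈ A}) := by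
    rintro ⟨a, b⟩ hq
    rcases min_le_iff.mp (hmin _ hq) with h | h
    · left; exact Set.mem_biUnion h ⟨b, hq, rfl⟩
    · right; exact Set.mem_biUnion h ⟨a, hq, rfl⟩
  refine Set.Finite.subset (Set.Finite.union ?_ ?_) hsub
  · exact Set.Finite.biUnion (Set.finite_Iic B)
      (fun a _ => ((hrow a).finite).image _)
  · exact Set.Finite.biUnion (Set.finite_Iic B)
      (fun b _ => ((hcol b).finite).image _)

lemma even_int_pow {j : ℕ} (hj : 0 < j) : Even ((2 : ℤ) ^ j) := by
  refine ⟨2 ^ (j - 1), ?_⟩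
  rw [← two_mul, ← pow_succ']
  congr 1; omega

lemma pairs_finite (p : ℕ → ℝ) (hp : Function.Injective p) (n : ℕ)
    (hptail : ∀ k, n < k → p k = 2 ^ k)
    (ω ω' : ℤ) (hω : Odd ω) (hω' : Odd ω') (θ θ' : ℝ)
    (hne : (ω, θ) ≠ (ω', θ')) :
    {q : ℕ × ℕ | (ω' : ℝ) * p q.1 - (ω : ℝ) * p q.2
      = (ω' : ℝ) * θ - (ω : ℝ) * θ'}.Finite := by
  set c : ℝ := (ω' : ℝ) * θ - (ω : ℝ) * θ' with hc
  have hωR : (ω : ℝ) ≠ 0 := Int.cast_ne_zero.mpr (odd_ne_zero hω)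
  have hω'R : (ω' : ℝ) ≠ 0 := Int.cast_ne_zero.mpr (odd_ne_zero hω')
  apply slices_finite (max n (Nat.floor |c|))
  · rintro ⟨a, b⟩ hq
    simp only [Set.mem_setOf_eq] at hq
    by_cases ha : a ≤ n
    · exact le_max_of_le_left (le_trans (min_le_left _ _) ha)
    by_cases hb : b ≤ n
    · exact le_max_of_le_left (le_trans (min_le_right _ _) hb)
    push_neg at ha hb
    rw [hptail a ha, hptail b hb] at hq
    set I : ℤ := ω' * 2 ^ a - ω * 2 ^ b with hI
    have hIc : (I : ℝ) = c := by push_cast [hI]; linarith [hq]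
    have habs : (2 : ℤ) ^ min a b ≤ |I| := by
      rcases lt_trichotomy a b with hab | hab | hab
      · have h2 : (2 : ℤ) ^ b = 2 ^ a * 2 ^ (b - a) := by
          rw [← pow_add]; congr 1; omega
        have key : I = 2 ^ a * (ω' - ω * 2 ^ (b - a)) := by rw [hI, h2]; ring
        have hoddm : Odd (ω' - ω * 2 ^ (b - a)) :=
          hω'.sub_even ((even_int_pow (by omega)).mul_left ω)
        have h1 : 1 ≤ |ω' - ω * 2 ^ (b - a)| := Int.one_le_abs (odd_ne_zero hoddm)
        rw [min_eq_left hab.le, key, abs_mul, abs_of_nonneg (by positivity : (0:ℤ) ≤ 2 ^ a)]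
        nlinarith [pow_pos (by norm_num : (0:ℤ) < 2) a]
      · subst hab
        by_cases hωω : ω = ω'
        · exfalso
          have hθ : θ ≠ θ' := by
            intro h; exact hne (by rw [hωω, h])
          have hc0 : c ≠ 0 := by
            rw [hc, ← hωω]
            have heq : (ω : ℝ) * θ - (ω : ℝ) * θ' = (ω : ℝ) * (θ - θ') := by ring
            rw [heq]
            exact mul_ne_zero hωR (sub_ne_zero.mpr hθ)
          apply hc0
          rw [← hIc, hI, ← hωω]
          push_cast; ring
        · have h1 : 1 ≤ |ω' - ω| := Int.one_le_abs (sub_ne_zero.mpr (Ne.symm hωω))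
          have key : I = (ω' - ω) * 2 ^ a := by rw [hI]; ring
          rw [min_self, key, abs_mul, abs_of_nonneg (by positivity : (0:ℤ) ≤ 2 ^ a)]
          nlinarith [pow_pos (by norm_num : (0:ℤ) < 2) a]
      · have h2 : (2 : ℤ) ^ a = 2 ^ b * 2 ^ (a - b) := by
          rw [← pow_add]; congr 1; omega
        have key : I = 2 ^ b * (ω' * 2 ^ (a - b) - ω) := by rw [hI, h2]; ring
        have hoddm : Odd (ω' * 2 ^ (a - b) - ω) :=
          Even.sub_odd ((even_int_pow (by omega)).mul_left ω') hω
        have h1 : 1 ≤ |ω' * 2 ^ (a - b) - ω| := Int.one_le_abs (odd_ne_zero hoddm)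
        rw [min_eq_right hab.le, key, abs_mul, abs_of_nonneg (by positivity : (0:ℤ) ≤ 2 ^ b)]
        nlinarith [pow_pos (by norm_num : (0:ℤ) < 2) b]
    refine le_max_of_le_right (Nat.le_floor ?_)
    have h1 : ((2 : ℝ) ^ min a b) ≤ |c| := by
      rw [← hIc, ← Int.cast_abs]
      exact_mod_cast habs
    have h2 : ((min a b : ℕ) : ℝ) < 2 ^ min a b := by
      exact_mod_cast (Nat.lt_two_pow_self (n := min a b))
    exact (h2.le.trans h1)
  · intro a b₁ h₁ b₂ h₂
    simp only [Set.mem_setOf_eq] at h₁ h₂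
    have : (ω : ℝ) * p b₁ = (ω : ℝ) * p b₂ := by linarith
    exact hp (mul_left_cancel₀ hωR this)
  · intro b a₁ h₁ a₂ h₂
    simp only [Set.mem_setOf_eq] at h₁ h₂
    have : (ω' : ℝ) * p a₁ = (ω' : ℝ) * p a₂ := by linarith
    exact hp (mul_left_cancel₀ hω'R this)

lemma selfAvoiding_range (p : ℕ → ℝ) (hp : Function.Injective p) (n : ℕ)
    (hptail : ∀ k, n < k → p k = 2 ^ k) : SelfAvoiding (Set.range p) := by
  intro m ω θ hm hodd hinj
  set j0 : Fin m := ⟨0, hm⟩ with hj0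
  refine ⟨j0, ?_⟩
  have hω0R : ((ω j0 : ℤ) : ℝ) ≠ 0 := Int.cast_ne_zero.mpr (odd_ne_zero (hodd j0))
  set T0 : Set ℝ := {t | ∃ s ∈ Set.range p, t = (s - θ j0) / (ω j0 : ℝ)} with hT0
  have hT0inf : T0.Infinite := by
    apply Set.infinite_of_injective_forall_mem
      (f := fun k : ℕ => (p (n + 1 + k) - θ j0) / (ω j0 : ℝ))
    · intro k₁ k₂ h
      simp only at h
      have h2 : p (n + 1 + k₁) = p (n + 1 + k₂) := by
        field_simp at h; linarith
      have := hp h2; omega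
    · intro k; exact ⟨p (n + 1 + k), Set.mem_range_self _, rfl⟩
  have hbad : ∀ j' : Fin m, j' ≠ j0 →
      (T0 ∩ {t | ∃ s ∈ Set.range p, t = (s - θ j') / (ω j' : ℝ)}).Finite := by
    intro j' hj'
    have hne : (ω j0, θ j0) ≠ (ω j', θ j') := by
      intro h; exact hj' (hinj h).symm
    have hfin := pairs_finite p hp n hptail (ω j0) (ω j') (hodd j0) (hodd j') (θ j0) (θ j') hne
    apply Set.Finite.subset (hfin.image (fun q => (p q.1 - θ j0) / (ω j0 : ℝ)))
    rintro t ⟨⟨s, ⟨a, rfl⟩, hta⟩, ⟨s', ⟨b, rfl⟩, htb⟩⟩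
    refine ⟨(a, b), ?_, ?_⟩
    · simp only [Set.mem_setOf_eq]
      have hω'R : ((ω j' : ℤ) : ℝ) ≠ 0 := Int.cast_ne_zero.mpr (odd_ne_zero (hodd j'))
      have h1 : p a - θ j0 = (ω j0 : ℝ) * t := by
        field_simp at hta; linarith [hta]
      have h2 : p b - θ j' = (ω j' : ℝ) * t := by
        field_simp at htb; linarith [htb]
      have h3 : (ω j' : ℝ) * (p a - θ j0) = (ω j0 : ℝ) * (p b - θ j') := by
        rw [h1, h2]; ring
      linarith [h3]
    · exact hta.symm
  have hUfin : (⋃ j' ∈ {j : Fin m | j ≠ j0},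
      (T0 ∩ {t | ∃ s ∈ Set.range p, t = (s - θ j') / (ω j' : ℝ)})).Finite :=
    Set.Finite.biUnion (Set.finite_univ.subset (Set.subset_univ _)) (fun j' hj' => hbad j' hj')
  have hdiff := hT0inf.diff hUfin
  obtain ⟨t, htT0, htU⟩ := hdiff.nonempty
  refine ⟨t, htT0, ?_⟩
  intro j' hj' hcon
  apply htU
  exact Set.mem_biUnion hj' ⟨htT0, hcon⟩
set_option maxHeartbeats 1000000 in
/-- Approximation proposition: every piecewise `C¹` function `ρ` (continuous, differentiable
with derivative `g` off a locally finite set `D`) with `g ∈ BV(ℝ) ∩ L¹(ℝ)` can be uniformly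
`ε`-approximated by `σ = C + Σ_{s∈S} c_s tanh(α(· − s))` with `S` a discrete self-avoiding
set, `(c_s) ∈ ℓ¹(S)` all nonzero, `α > 0` and `C ∈ ℝ`. -/
theorem approx_by_selfAvoiding_tanh_sum (ρ g : ℝ → ℝ) (D : Set ℝ)
    (hDlocfin : ∀ K : Set ℝ, IsCompact K → (K ∩ D).Finite)
    (hρcont : Continuous ρ)
    (hderiv : ∀ x ∉ D, HasDerivAt ρ (g x) x)
    (hg_int : Integrable g)
    (hg_bv : ∃ Cb : ℝ, ∀ φ : ℝ → ℝ, ContDiff ℝ 1 φ → HasCompactSupport φ →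
      (∀ x, |φ x| ≤ 1) → (∫ x, g x * deriv φ x) ≤ Cb)
    (ε : ℝ) (hε : 0 < ε) :
    ∃ (S : Set ℝ) (c : ℝ → ℝ) (α C : ℝ),
      (∀ x ∈ S, ∃ δ > 0, ∀ y ∈ S, |y - x| < δ → y = x) ∧
      SelfAvoiding S ∧
      (∀ s ∈ S, c s ≠ 0) ∧
      Summable (fun s : S => |c s|) ∧
      0 < α ∧
      ∀ x : ℝ, |(C + ∑' s : S, c s * Real.tanh (α * (x - s))) - ρ x| < ε := by
  classical
  set ε₀ : ℝ := ε / 8 with hε₀def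
  have hε₀ : 0 < ε₀ := by positivity
  have ftc := ftc_aux ρ g D hDlocfin hρcont hderiv hg_int
  have hρint : ∀ x : ℝ, ρ x = ρ 0 + ∫ t in (0:ℝ)..x, g t := by
    intro x
    rcases le_total (0:ℝ) x with hx | hx
    · rw [ftc 0 x hx]; ring
    · rw [intervalIntegral.integral_symm, ftc x 0 hx]; ring
  set Lp : ℝ := ρ 0 + ∫ t in Set.Ioi (0:ℝ), g t with hLpdef
  set Lm : ℝ := ρ 0 - ∫ t in Set.Iic (0:ℝ), g t with hLmdef
  have hLp : Filter.Tendsto ρ Filter.atTop (nhds Lp) := by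
    have h1 := MeasureTheory.intervalIntegral_tendsto_integral_Ioi 0
      hg_int.integrableOn (Filter.tendsto_id (α := ℝ))
    have h2 := h1.const_add (ρ 0)
    refine h2.congr (fun x => ?_)
    simp only [id_eq]
    exact (hρint x).symm
  have hLm : Filter.Tendsto ρ Filter.atBot (nhds Lm) := by
    have h1 := MeasureTheory.intervalIntegral_tendsto_integral_Iic 0
      hg_int.integrableOn (Filter.tendsto_id (α := ℝ))
    have h2 := h1.const_sub (ρ 0)
    refine h2.congr (fun x => ?_)
    simp only [id_eq]
    rw [hρint x, intervalIntegral.integral_symm]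
    ring
  obtain ⟨R₁, hR₁⟩ : ∃ R₁ : ℝ, ∀ x : ℝ, R₁ ≤ x → |ρ x - Lp| ≤ ε₀ := by
    have h1 := Metric.tendsto_nhds.mp hLp ε₀ hε₀
    rcases Filter.eventually_atTop.mp h1 with ⟨N, hN⟩
    refine ⟨N, fun x hx => ?_⟩
    have h2 := hN x hx
    rw [Real.dist_eq] at h2
    linarith [h2.le]
  obtain ⟨R₂, hR₂⟩ : ∃ R₂ : ℝ, ∀ x : ℝ, x ≤ R₂ → |ρ x - Lm| ≤ ε₀ := by
    have h1 := Metric.tendsto_nhds.mp hLm ε₀ hε₀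
    rcases Filter.eventually_atBot.mp h1 with ⟨N, hN⟩
    refine ⟨N, fun x hx => ?_⟩
    have h2 := hN x hx
    rw [Real.dist_eq] at h2
    linarith [h2.le]
  set R : ℝ := max 1 (max R₁ (-R₂)) with hRdef
  have hR1 : (1:ℝ) ≤ R := le_max_left _ _
  have hRpos : (0:ℝ) < R := lt_of_lt_of_le one_pos hR1
  have hRp : ∀ x : ℝ, R ≤ x → |ρ x - Lp| ≤ ε₀ := fun x hx =>
    hR₁ x (le_trans (le_trans (le_max_left R₁ (-R₂)) (le_max_right 1 _)) hx)
  have hRm : ∀ x : ℝ, x ≤ -R → |ρ x - Lm| ≤ ε₀ := by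
    intro x hx
    apply hR₂
    have h1 : -R₂ ≤ R := le_trans (le_max_right R₁ (-R₂)) (le_max_right 1 _)
    linarith
  obtain ⟨δ, hδpos, hδ⟩ := Metric.uniformContinuousOn_iff.mp
    ((isCompact_Icc (a := -R) (b := R)).uniformContinuousOn_of_continuous
      hρcont.continuousOn) ε₀ hε₀
  set n : ℕ := max (max ⌈R⌉₊ ⌈4*R/δ⌉₊) 1 with hndef
  have hn1 : 1 ≤ n := le_max_right _ _
  have hnR : R ≤ (n:ℝ) := by
    have h1 : (⌈R⌉₊:ℝ) ≤ (n:ℝ) :=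
      Nat.cast_le.mpr (le_trans (le_max_left _ _) (le_max_left _ _))
    exact le_trans (Nat.le_ceil R) h1
  have hnpos : (0:ℝ) < (n:ℝ) := by exact_mod_cast hn1
  have hnδ : 4*R/δ ≤ (n:ℝ) := by
    have h1 : (⌈4*R/δ⌉₊:ℝ) ≤ (n:ℝ) :=
      Nat.cast_le.mpr (le_trans (le_max_right _ _) (le_max_left _ _))
    exact le_trans (Nat.le_ceil _) h1
  set h : ℝ := 2*R/n with hhdef
  have hh : 0 < h := by positivity
  have hhδ : h ≤ δ/2 := by
    rw [hhdef, div_le_iff₀ hnpos]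
    have h1 : 4*R ≤ (n:ℝ) * δ := by
      have h2 := (div_le_iff₀ hδpos).mp hnδ
      linarith
    linarith
  obtain ⟨sgrid, hsgrid⟩ : ∃ f : ℕ → ℝ, ∀ k : ℕ, f k = -R + k*h :=
    ⟨fun k => -R + k*h, fun _ => rfl⟩
  have hsgrid_mono : ∀ k l : ℕ, k ≤ l → sgrid k ≤ sgrid l := by
    intro k l hkl
    rw [hsgrid, hsgrid]
    have h1 : (k:ℝ) ≤ (l:ℝ) := Nat.cast_le.mpr hkl
    nlinarith
  have hsgrid_step : ∀ k l : ℕ, k < l → sgrid k + h ≤ sgrid l := by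
    intro k l hkl
    rw [hsgrid, hsgrid]
    have h1 : (k:ℝ) + 1 ≤ (l:ℝ) := by exact_mod_cast hkl
    nlinarith
  have hsgrid_succ : ∀ k : ℕ, sgrid (k+1) = sgrid k + h := by
    intro k; rw [hsgrid, hsgrid]; push_cast; ring
  have hsgrid0 : sgrid 0 = -R := by rw [hsgrid]; simp
  have hsgridn : sgrid n = R := by
    have hn0 : (n:ℝ) ≠ 0 := ne_of_gt hnpos
    rw [hsgrid, hhdef]
    field_simp
    ring
  have hsgrid_mem : ∀ k, k ≤ n → sgrid k ∈ Set.Icc (-R) R := by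
    intro k hk
    constructor
    · rw [← hsgrid0]; exact hsgrid_mono 0 k (Nat.zero_le k)
    · rw [← hsgridn]; exact hsgrid_mono k n hk
  have hRlt : R < 2^(n+1) := by
    have h1 : (n:ℝ) < 2^n := by exact_mod_cast (Nat.lt_two_pow_self (n := n))
    have h2 : (2:ℝ)^n < 2^(n+1) := by
      have h3 := pow_pos (show (0:ℝ) < 2 by norm_num) n
      rw [pow_succ]; nlinarith
    linarith [hnR]
  have htwopow : ∀ k l : ℕ, k < l → (2:ℝ)^k < 2^l := fun k l hkl =>
    pow_lt_pow_right₀ (by norm_num) hkl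
  obtain ⟨p, hpfull⟩ : ∃ f : ℕ → ℝ, ∀ k : ℕ, f k = if k ≤ n then sgrid k else 2^k :=
    ⟨fun k => if k ≤ n then sgrid k else 2^k, fun _ => rfl⟩
  have hphead : ∀ k, k ≤ n → p k = sgrid k := fun k hk => by rw [hpfull, if_pos hk]
  have hptail : ∀ k, n < k → p k = 2^k := fun k hk => by rw [hpfull, if_neg (by omega)]
  have hp_big : ∀ k, n < k → (2:ℝ)^(n+1) ≤ p k := by
    intro k hk
    rw [hptail k hk]
    exact pow_le_pow_right₀ (by norm_num) (by omega)
  have hp : Function.Injective p := by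
    intro k l hkl
    by_cases hk : k ≤ n <;> by_cases hl : l ≤ n
    · rw [hphead k hk, hphead l hl, hsgrid, hsgrid] at hkl
      have h1 : (k:ℝ)*h = (l:ℝ)*h := by linarith
      have h2 : (k:ℝ) = (l:ℝ) := mul_right_cancel₀ hh.ne' h1
      exact_mod_cast h2
    · exfalso
      have h1 := (hsgrid_mem k hk).2
      have h2 := hp_big l (by omega)
      rw [hphead k hk] at hkl
      rw [← hkl] at h2
      linarith
    · exfalso
      have h1 := (hsgrid_mem l hl).2
      have h2 := hp_big k (by omega)
      rw [hphead l hl] at hkl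
      rw [hkl] at h2
      linarith
    · rw [hptail k (by omega), hptail l (by omega)] at hkl
      by_contra hne
      rcases Nat.lt_or_ge k l with h' | h'
      · exact absurd hkl (ne_of_lt (htwopow k l h'))
      · have h'' : l < k := by omega
        exact absurd hkl.symm (ne_of_lt (htwopow l k h''))
  set δ₀ : ℝ := min h (2^(n+1) - R) with hδ₀def
  have hδ₀pos : 0 < δ₀ := lt_min hh (by linarith)
  have hsep : ∀ k l : ℕ, k ≠ l → δ₀ ≤ |p k - p l| := by
    have key : ∀ k l : ℕ, k < l → δ₀ ≤ p l - p k := by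
      intro k l hkl
      by_cases hl : l ≤ n
      · rw [hphead k (by omega), hphead l hl]
        have h1 := hsgrid_step k l hkl
        exact le_trans (min_le_left _ _) (by linarith)
      · have hl2 : (2:ℝ)^(n+1) ≤ p l := hp_big l (by omega)
        by_cases hk : k ≤ n
        · rw [hphead k hk]
          have h1 := (hsgrid_mem k hk).2
          exact le_trans (min_le_right _ _) (by linarith)
        · rw [hptail k (by omega), hptail l (by omega)]
          have hk1 : (2:ℝ)^(n+1) ≤ 2^k := pow_le_pow_right₀ (by norm_num) (by omega)
          have hk2 : (2:ℝ)^(k+1) ≤ 2^l := pow_le_pow_right₀ (by norm_num) (by omega)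
          have hk3 : (2:ℝ)^(k+1) = 2*2^k := by rw [pow_succ]; ring
          refine le_trans (min_le_right _ _) ?_
          nlinarith [hRpos]
    intro k l hkl
    rcases Nat.lt_or_ge k l with h' | h'
    · rw [abs_sub_comm]
      exact le_trans (key k l h') (le_abs_self _)
    · have h'' : l < k := by omega
      exact le_trans (key l k h'') (le_abs_self _)
  obtain ⟨w, hw0, hwS⟩ : ∃ w : ℕ → ℝ, w 0 = Lm ∧ ∀ k : ℕ, w (k+1) = ρ (sgrid k) :=
    ⟨fun k => match k with | 0 => Lm | (i+1) => ρ (sgrid i), rfl, fun _ => rfl⟩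
  obtain ⟨base, hbase⟩ : ∃ f : ℕ → ℝ, ∀ k : ℕ, f k = (w (k+1) - w k)/2 :=
    ⟨fun k => (w (k+1) - w k)/2, fun _ => rfl⟩
  obtain ⟨γ, hγle, hγgt⟩ : ∃ f : ℕ → ℝ,
      (∀ k, k ≤ n → f k = if base k = 0 then ε₀*(1/2)^(k+2) else base k) ∧
      (∀ k, n < k → f k = ε₀*(1/2)^(k+1)) :=
    ⟨fun k => if k ≤ n then (if base k = 0 then ε₀*(1/2)^(k+2) else base k)
      else ε₀*(1/2)^(k+1), fun k hk => if_pos hk, fun k hk => if_neg (by omega)⟩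
  have hγne : ∀ k, γ k ≠ 0 := by
    intro k
    by_cases hk : k ≤ n
    · rw [hγle k hk]
      split_ifs with h1
      · positivity
      · exact h1
    · rw [hγgt k (by omega)]
      positivity
  have hbase_small : ∀ k, k ≤ n → |base k| ≤ ε₀/2 := by
    intro k hk
    rcases k with _ | i
    · rw [hbase, hwS, hw0, hsgrid0]
      have h1 := hRm (-R) le_rfl
      rw [abs_div, abs_two]
      linarith
    · rw [hbase, hwS, hwS]
      have h1 : dist (ρ (sgrid (i+1))) (ρ (sgrid i)) < ε₀ := by
        apply hδ _ (hsgrid_mem (i+1) hk) _ (hsgrid_mem i (by omega))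
        rw [Real.dist_eq, hsgrid_succ i, add_sub_cancel_left, abs_of_pos hh]
        linarith
      rw [Real.dist_eq] at h1
      rw [abs_div, abs_two]
      linarith
  have hγ_small : ∀ k, |γ k| ≤ ε₀/2 := by
    intro k
    by_cases hk : k ≤ n
    · rw [hγle k hk]
      split_ifs with h1
      · have hq : ((1:ℝ)/2)^(k+2) ≤ ((1:ℝ)/2)^1 :=
          pow_le_pow_of_le_one (by norm_num) (by norm_num) (by omega)
        rw [abs_of_pos (by positivity)]
        calc ε₀*(1/2)^(k+2) ≤ ε₀*((1:ℝ)/2)^1 :=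
              mul_le_mul_of_nonneg_left hq hε₀.le
        _ = ε₀/2 := by ring
      · exact hbase_small k hk
    · rw [hγgt k (by omega)]
      have hq : ((1:ℝ)/2)^(k+1) ≤ ((1:ℝ)/2)^1 :=
        pow_le_pow_of_le_one (by norm_num) (by norm_num) (by omega)
      rw [abs_of_pos (by positivity)]
      calc ε₀*(1/2)^(k+1) ≤ ε₀*((1:ℝ)/2)^1 :=
            mul_le_mul_of_nonneg_left hq hε₀.le
      _ = ε₀/2 := by ring
  have hγbase : ∀ k, k ≤ n → |γ k - base k| ≤ ε₀*(1/2)^(k+2) := by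
    intro k hk
    rw [hγle k hk]
    split_ifs with h1
    · rw [h1, sub_zero, abs_of_pos (by positivity)]
    · rw [sub_self, abs_zero]; positivity
  set α : ℝ := max 1 (Real.log (2*((n:ℝ)+1)) / (2*h)) with hαdef
  have hα1 : (1:ℝ) ≤ α := le_max_left _ _
  have hαpos : 0 < α := lt_of_lt_of_le one_pos hα1
  have hexp : Real.exp (-(2*(α*h))) ≤ 1/(2*((n:ℝ)+1)) := by
    have hlog : Real.log (2*((n:ℝ)+1)) ≤ 2*(α*h) := by
      have h1 : Real.log (2*((n:ℝ)+1)) / (2*h) ≤ α := le_max_right _ _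
      calc Real.log (2*((n:ℝ)+1)) = (Real.log (2*((n:ℝ)+1)) / (2*h)) * (2*h) := by
            field_simp
      _ ≤ α * (2*h) := mul_le_mul_of_nonneg_right h1 (by positivity)
      _ = 2*(α*h) := by ring
    have h2 : Real.exp (-(2*(α*h))) ≤ Real.exp (-(Real.log (2*((n:ℝ)+1)))) :=
      Real.exp_le_exp.mpr (by linarith)
    have h3 : Real.exp (-(Real.log (2*((n:ℝ)+1)))) = 1/(2*((n:ℝ)+1)) := by
      rw [Real.exp_neg, Real.exp_log (by positivity), one_div]
    linarith
  have hfar_hi : ∀ u : ℝ, α*h ≤ u → |Real.tanh u - 1| ≤ 1/((n:ℝ)+1) := by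
    intro u hu
    have h1 : Real.tanh u ≤ 1 := by
      have h2 := abs_tanh_le_one u; rw [abs_le] at h2; exact h2.2
    rw [abs_of_nonpos (by linarith)]
    have h2 := one_sub_tanh_le u
    have h3 : Real.exp (-(2*u)) ≤ Real.exp (-(2*(α*h))) :=
      Real.exp_le_exp.mpr (by linarith)
    have h4 : 2*(1/(2*((n:ℝ)+1))) = 1/((n:ℝ)+1) := by
      field_simp
    linarith [hexp]
  have hfar_lo : ∀ u : ℝ, u ≤ -(α*h) → |Real.tanh u + 1| ≤ 1/((n:ℝ)+1) := by
    intro u hu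
    have h1 := hfar_hi (-u) (by linarith)
    rw [Real.tanh_neg] at h1
    rw [show Real.tanh u + 1 = -(-Real.tanh u - 1) by ring, abs_neg]
    exact h1
  obtain ⟨c, hcp⟩ : ∃ c : ℝ → ℝ, ∀ k : ℕ, c (p k) = γ k :=
    ⟨fun s => γ (Function.invFun p s), fun k => congrArg γ (Function.leftInverse_invFun hp k)⟩
  set C : ℝ := (w 0 + w (n+1))/2 with hCdef
  set S : Set ℝ := Set.range p with hSdef
  have habs : Summable (fun k => |γ k|) := by
    rw [← summable_nat_add_iff (n+1)]
    apply Summable.congr ((summable_geometric_two).mul_left (ε₀*(1/2)^(n+2)))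
    intro k
    rw [hγgt (k + (n+1)) (by omega)]
    rw [abs_of_pos (by positivity)]
    rw [show k + (n+1) + 1 = (n+2) + k by omega, pow_add]
    ring
  have hsummand : ∀ x : ℝ, Summable (fun k => γ k * Real.tanh (α*(x - p k))) := by
    intro x
    apply Summable.of_norm_bounded habs
    intro k
    rw [Real.norm_eq_abs, abs_mul]
    calc |γ k| * |Real.tanh (α*(x - p k))| ≤ |γ k| * 1 :=
          mul_le_mul_of_nonneg_left (abs_tanh_le_one _) (abs_nonneg _)
    _ = |γ k| := mul_one _
  have htsum_eq : ∀ x : ℝ, (∑' (s : ↥S), c ↑s * Real.tanh (α * (x - ↑s)))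
      = ∑' k : ℕ, γ k * Real.tanh (α*(x - p k)) := by
    intro x
    rw [← Equiv.tsum_eq (Equiv.ofInjective p hp)
      (fun s : ↥S => c ↑s * Real.tanh (α * (x - ↑s)))]
    apply tsum_congr
    intro k
    have hco : ((Equiv.ofInjective p hp k : ↥S) : ℝ) = p k := rfl
    rw [hco, hcp k]
  have hT : ∀ m : ℕ, ∑ k ∈ Finset.range m, base k = (w m - w 0)/2 := by
    intro m
    have h1 : ∀ k ∈ Finset.range m, base k = (w (k+1) - w k)/2 := fun k _ => hbase k
    rw [Finset.sum_congr rfl h1, ← Finset.sum_div, Finset.sum_range_sub]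
  have keyest : ∀ (x target : ℝ) (E : ℕ → ℝ) (k₁ k₂ : ℕ),
      (∀ k, k ≤ n → E k = 1 ∨ E k = -1) →
      ((∑ k ∈ Finset.range (n+1), base k * E k) + C = target) →
      (|ρ x - target| ≤ 2*ε₀) →
      (∀ k, k ≤ n → k ≠ k₁ → k ≠ k₂ →
        |Real.tanh (α*(x - sgrid k)) - E k| ≤ 1/((n:ℝ)+1)) →
      |(C + ∑' (s : ↥S), c ↑s * Real.tanh (α * (x - ↑s))) - ρ x| < ε := by
    intro x target E k₁ k₂ hE htele htarget hfar
    rw [htsum_eq x,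
      ← Summable.sum_add_tsum_nat_add (f := fun k => γ k * Real.tanh (α*(x - p k))) (n+1)
        (hsummand x)]
    have htail1 : ∀ i : ℕ, ‖γ (i+(n+1)) * Real.tanh (α*(x - p (i+(n+1))))‖
        ≤ ε₀*(1/2)^(n+2)*(1/2)^i := by
      intro i
      rw [Real.norm_eq_abs, abs_mul]
      have h1 : |γ (i+(n+1))| = ε₀*(1/2)^(n+2)*(1/2)^i := by
        rw [hγgt (i+(n+1)) (by omega), abs_of_pos (by positivity)]
        rw [show i + (n+1) + 1 = (n+2) + i by omega, pow_add]
        ring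
      calc |γ (i+(n+1))| * |Real.tanh (α*(x - p (i+(n+1))))| ≤ |γ (i+(n+1))| * 1 :=
            mul_le_mul_of_nonneg_left (abs_tanh_le_one _) (abs_nonneg _)
      _ = ε₀*(1/2)^(n+2)*(1/2)^i := by rw [mul_one, h1]
    have hgeo : Summable (fun i : ℕ => ε₀*(1/2)^(n+2)*(1/2:ℝ)^i) :=
      summable_geometric_two.mul_left _
    have htailsummable : Summable
        (fun i => ‖γ (i+(n+1)) * Real.tanh (α*(x - p (i+(n+1))))‖) :=
      Summable.of_nonneg_of_le (fun i => norm_nonneg _) htail1 hgeo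
    have htail : |∑' i : ℕ, γ (i+(n+1)) * Real.tanh (α*(x - p (i+(n+1))))| ≤ ε₀ := by
      have hstep1 := norm_tsum_le_tsum_norm htailsummable
      rw [Real.norm_eq_abs] at hstep1
      have hstep2 : (∑' i : ℕ, ‖γ (i+(n+1)) * Real.tanh (α*(x - p (i+(n+1))))‖)
          ≤ ∑' i : ℕ, ε₀*(1/2)^(n+2)*(1/2:ℝ)^i :=
        Summable.tsum_le_tsum htail1 htailsummable hgeo
      have hstep3 : (∑' i : ℕ, ε₀*(1/2)^(n+2)*(1/2:ℝ)^i) = ε₀*(1/2)^(n+2)*2 := by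
        rw [tsum_mul_left, tsum_geometric_two]
      have hstep4 : ε₀*(1/2)^(n+2)*2 ≤ ε₀ := by
        have hq : ((1:ℝ)/2)^(n+2) ≤ ((1:ℝ)/2)^1 :=
          pow_le_pow_of_le_one (by norm_num) (by norm_num) (by omega)
        nlinarith
      linarith
    have hhead : ∀ k ∈ Finset.range (n+1),
        γ k * Real.tanh (α*(x - p k)) = γ k * Real.tanh (α*(x - sgrid k)) := by
      intro k hk
      rw [Finset.mem_range] at hk
      rw [hphead k (by omega)]
    rw [Finset.sum_congr rfl hhead]
    have hdecomp : ∑ k ∈ Finset.range (n+1), γ k * Real.tanh (α*(x - sgrid k))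
        = (∑ k ∈ Finset.range (n+1), base k * E k)
          + ((∑ k ∈ Finset.range (n+1), (γ k - base k) * E k)
          + (∑ k ∈ Finset.range (n+1), γ k * (Real.tanh (α*(x - sgrid k)) - E k))) := by
      rw [← Finset.sum_add_distrib, ← Finset.sum_add_distrib]
      exact Finset.sum_congr rfl (fun k _ => by ring)
    rw [hdecomp]
    have habsE : ∀ k, k ≤ n → |E k| = 1 := by
      intro k hk
      rcases hE k hk with h1 | h1 <;> rw [h1] <;> simp
    have hmid : |∑ k ∈ Finset.range (n+1), (γ k - base k) * E k| ≤ ε₀/2 := by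
      have h1 := Finset.abs_sum_le_sum_abs
        (fun k => (γ k - base k) * E k) (Finset.range (n+1))
      have h2 : ∑ k ∈ Finset.range (n+1), |(γ k - base k) * E k|
          ≤ ∑ k ∈ Finset.range (n+1), ε₀*((1:ℝ)/2)^(k+2) := by
        apply Finset.sum_le_sum
        intro k hk
        rw [Finset.mem_range] at hk
        rw [abs_mul, habsE k (by omega), mul_one]
        exact hγbase k (by omega)
      have h3 : ∑ k ∈ Finset.range (n+1), ε₀*((1:ℝ)/2)^(k+2)
          = ε₀/4 * ∑ k ∈ Finset.range (n+1), ((1:ℝ)/2)^k := by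
        rw [Finset.mul_sum]
        apply Finset.sum_congr rfl
        intro k _
        rw [pow_add]
        ring
      have h4 : ∑ k ∈ Finset.range (n+1), ((1:ℝ)/2)^k ≤ 2 := by
        have h4a := Summable.sum_le_tsum (Finset.range (n+1))
          (fun i _ => by positivity : ∀ i ∉ Finset.range (n+1), (0:ℝ) ≤ (1/2)^i)
          summable_geometric_two
        rw [tsum_geometric_two] at h4a
        exact h4a
      have h5 : ε₀/4 * ∑ k ∈ Finset.range (n+1), ((1:ℝ)/2)^k ≤ ε₀/2 := by
        nlinarith
      linarith
    have herr : |∑ k ∈ Finset.range (n+1),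
        γ k * (Real.tanh (α*(x - sgrid k)) - E k)| ≤ 5*ε₀/2 := by
      have h1 := Finset.abs_sum_le_sum_abs
        (fun k => γ k * (Real.tanh (α*(x - sgrid k)) - E k)) (Finset.range (n+1))
      have h2 : ∀ k ∈ Finset.range (n+1),
          |γ k * (Real.tanh (α*(x - sgrid k)) - E k)|
          ≤ ε₀/(2*((n:ℝ)+1))
            + ((if k = k₁ then ε₀ else 0) + (if k = k₂ then ε₀ else 0)) := by
        intro k hk
        rw [Finset.mem_range] at hk
        have hkn : k ≤ n := by omega
        by_cases hnear : k = k₁ ∨ k = k₂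
        · have hb : |γ k * (Real.tanh (α*(x - sgrid k)) - E k)| ≤ ε₀ := by
            rw [abs_mul]
            have hb1 : |Real.tanh (α*(x - sgrid k)) - E k| ≤ 2 := by
              have h3 := abs_sub (Real.tanh (α*(x - sgrid k))) (E k)
              have h4 := abs_tanh_le_one (α*(x - sgrid k))
              have h5 := habsE k hkn
              linarith
            calc |γ k| * |Real.tanh (α*(x - sgrid k)) - E k| ≤ (ε₀/2) * 2 :=
                  mul_le_mul (hγ_small k) hb1 (abs_nonneg _) (by positivity)
            _ = ε₀ := by ring
          have hnn : (0:ℝ) ≤ ε₀/(2*((n:ℝ)+1)) := by positivity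
          rcases hnear with h6 | h6
          · rw [if_pos h6]
            have h7 : (0:ℝ) ≤ (if k = k₂ then ε₀ else 0) := by positivity
            linarith
          · rw [if_pos h6]
            have h7 : (0:ℝ) ≤ (if k = k₁ then ε₀ else 0) := by positivity
            linarith
        · push_neg at hnear
          have hfar2 := hfar k hkn hnear.1 hnear.2
          rw [abs_mul]
          have hb : |γ k| * |Real.tanh (α*(x - sgrid k)) - E k|
              ≤ (ε₀/2) * (1/((n:ℝ)+1)) :=
            mul_le_mul (hγ_small k) hfar2 (abs_nonneg _) (by positivity)
          have heq : (ε₀/2) * (1/((n:ℝ)+1)) = ε₀/(2*((n:ℝ)+1)) := by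
            field_simp
          have hb' : |γ k| * |Real.tanh (α*(x - sgrid k)) - E k|
              ≤ ε₀/(2*((n:ℝ)+1)) := by rw [← heq]; exact hb
          have h6 : (0:ℝ) ≤ (if k = k₁ then ε₀ else 0) := by positivity
          have h7 : (0:ℝ) ≤ (if k = k₂ then ε₀ else 0) := by positivity
          linarith
      have h3 : ∑ k ∈ Finset.range (n+1),
          (ε₀/(2*((n:ℝ)+1))
            + ((if k = k₁ then ε₀ else 0) + (if k = k₂ then ε₀ else 0)))
          ≤ ε₀/2 + (ε₀ + ε₀) := by
        rw [Finset.sum_add_distrib, Finset.sum_add_distrib, Finset.sum_const,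
          Finset.card_range]
        have hne1 : ((n:ℝ)+1) ≠ 0 := by positivity
        have h4 : (n+1) • (ε₀/(2*((n:ℝ)+1))) = ε₀/2 := by
          rw [nsmul_eq_mul]
          push_cast
          field_simp
        have h5 : (∑ k ∈ Finset.range (n+1), if k = k₁ then ε₀ else 0) ≤ ε₀ := by
          rw [Finset.sum_ite_eq' (Finset.range (n+1)) k₁ (fun _ => ε₀)]
          split_ifs
          · exact le_rfl
          · exact hε₀.le
        have h6 : (∑ k ∈ Finset.range (n+1), if k = k₂ then ε₀ else 0) ≤ ε₀ := by
          rw [Finset.sum_ite_eq' (Finset.range (n+1)) k₂ (fun _ => ε₀)]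
          split_ifs
          · exact le_rfl
          · exact hε₀.le
        rw [h4]
        linarith
      calc |∑ k ∈ Finset.range (n+1), γ k * (Real.tanh (α*(x - sgrid k)) - E k)|
          ≤ ∑ k ∈ Finset.range (n+1), |γ k * (Real.tanh (α*(x - sgrid k)) - E k)| := h1
      _ ≤ ∑ k ∈ Finset.range (n+1),
          (ε₀/(2*((n:ℝ)+1))
            + ((if k = k₁ then ε₀ else 0) + (if k = k₂ then ε₀ else 0))) :=
          Finset.sum_le_sum h2
      _ ≤ ε₀/2 + (ε₀ + ε₀) := h3
      _ = 5*ε₀/2 := by ring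
    have heq : C + (((∑ k ∈ Finset.range (n+1), base k * E k)
          + ((∑ k ∈ Finset.range (n+1), (γ k - base k) * E k)
          + (∑ k ∈ Finset.range (n+1), γ k * (Real.tanh (α*(x - sgrid k)) - E k))))
          + (∑' i : ℕ, γ (i+(n+1)) * Real.tanh (α*(x - p (i+(n+1)))))) - ρ x
        = (target - ρ x)
          + (∑ k ∈ Finset.range (n+1), (γ k - base k) * E k)
          + (∑ k ∈ Finset.range (n+1), γ k * (Real.tanh (α*(x - sgrid k)) - E k))
          + (∑' i : ℕ, γ (i+(n+1)) * Real.tanh (α*(x - p (i+(n+1))))) := by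
      rw [← htele]; ring
    rw [heq]
    have t1 := abs_add_le ((target - ρ x)
        + (∑ k ∈ Finset.range (n+1), (γ k - base k) * E k)
        + (∑ k ∈ Finset.range (n+1), γ k * (Real.tanh (α*(x - sgrid k)) - E k)))
      (∑' i : ℕ, γ (i+(n+1)) * Real.tanh (α*(x - p (i+(n+1)))))
    have t2 := abs_add_le ((target - ρ x)
        + (∑ k ∈ Finset.range (n+1), (γ k - base k) * E k))
      (∑ k ∈ Finset.range (n+1), γ k * (Real.tanh (α*(x - sgrid k)) - E k))
    have t3 := abs_add_le (target - ρ x)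
      (∑ k ∈ Finset.range (n+1), (γ k - base k) * E k)
    have t4 : |target - ρ x| = |ρ x - target| := abs_sub_comm _ _
    have hfin : |ρ x - target| + ε₀/2 + 5*ε₀/2 + ε₀ < ε := by
      rw [hε₀def] at *
      linarith [htarget]
    linarith [htarget, hmid, herr, htail]
  refine ⟨S, c, α, C, ?_, ?_, ?_, ?_, hαpos, ?_⟩
  · rintro x ⟨k, rfl⟩
    refine ⟨δ₀, hδ₀pos, ?_⟩
    rintro y ⟨l, rfl⟩ hlt
    by_contra hne
    have hkl : l ≠ k := fun hc => hne (by rw [hc])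
    have h1 := hsep l k hkl
    linarith [hlt]
  · exact selfAvoiding_range p hp n hptail
  · rintro s ⟨k, rfl⟩
    rw [hcp k]
    exact hγne k
  · have h1 : Summable ((fun s : ↥S => |c ↑s|) ∘ (Equiv.ofInjective p hp)) := by
      apply Summable.congr habs
      intro k
      have hco : ((Equiv.ofInjective p hp k : ↥S) : ℝ) = p k := rfl
      simp only [Function.comp_apply, hco, hcp k]
    exact (Equiv.summable_iff (Equiv.ofInjective p hp)).mp h1
  · intro x
    by_cases hcase : x < sgrid 0
    · apply keyest x (w 0) (fun _ => (-1:ℝ)) 0 0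
      · intro k _; right; rfl
      · show (∑ k ∈ Finset.range (n+1), base k * (-1:ℝ)) + C = w 0
        have h1 : ∑ k ∈ Finset.range (n+1), base k * (-1:ℝ)
            = -∑ k ∈ Finset.range (n+1), base k := by
          rw [← Finset.sum_neg_distrib]
          exact Finset.sum_congr rfl (fun k _ => by ring)
        rw [h1, hT (n+1), hCdef]
        ring
      · have hx0 : x ≤ -R := by rw [hsgrid0] at hcase; linarith
        have h2 := hRm x hx0
        rw [hw0]
        linarith
      · intro k hk hk1 _
        have hkpos : 0 < k := Nat.pos_of_ne_zero hk1
        show |Real.tanh (α*(x - sgrid k)) - (-1:ℝ)| ≤ 1/((n:ℝ)+1)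
        rw [sub_neg_eq_add]
        apply hfar_lo
        have h3 := hsgrid_step 0 k hkpos
        have h4 : x - sgrid k ≤ -h := by linarith
        calc α*(x - sgrid k) ≤ α*(-h) := mul_le_mul_of_nonneg_left h4 hαpos.le
        _ = -(α*h) := by ring
    · push_neg at hcase
      set j : ℕ := Nat.findGreatest (fun k => sgrid k ≤ x) n with hjdef
      have hjle : j ≤ n := Nat.findGreatest_le n
      have hPj : sgrid j ≤ x := by
        have h0 := Nat.findGreatest_spec (P := fun k => sgrid k ≤ x) (Nat.zero_le n) hcase
        exact h0
      have hgt : ∀ k, j < k → k ≤ n → x < sgrid k := by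
        intro k h1 h2
        by_contra hcon
        push_neg at hcon
        have h3 := Nat.le_findGreatest (P := fun k => sgrid k ≤ x) h2 hcon
        have h4 : k ≤ j := h3
        omega
      apply keyest x (w (j+1)) (fun k => if k ≤ j then (1:ℝ) else -1) j (j+1)
      · intro k _
        by_cases hle : k ≤ j
        · left; show (if k ≤ j then (1:ℝ) else -1) = 1; rw [if_pos hle]
        · right; show (if k ≤ j then (1:ℝ) else -1) = -1; rw [if_neg hle]
      · show (∑ k ∈ Finset.range (n+1), base k * (if k ≤ j then (1:ℝ) else -1)) + C
            = w (j+1)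
        have esplit : ∑ k ∈ Finset.Ico 0 (j+1), base k * (if k ≤ j then (1:ℝ) else -1)
              + ∑ k ∈ Finset.Ico (j+1) (n+1), base k * (if k ≤ j then (1:ℝ) else -1)
            = ∑ k ∈ Finset.Ico 0 (n+1), base k * (if k ≤ j then (1:ℝ) else -1) :=
          Finset.sum_Ico_consecutive _ (Nat.zero_le _) (by omega)
        have e1 : ∑ k ∈ Finset.Ico 0 (j+1), base k * (if k ≤ j then (1:ℝ) else -1)
            = ∑ k ∈ Finset.range (j+1), base k := by
          rw [← Finset.range_eq_Ico]
          apply Finset.sum_congr rfl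
          intro k hk
          rw [Finset.mem_range] at hk
          rw [if_pos (by omega), mul_one]
        have e2 : ∑ k ∈ Finset.Ico (j+1) (n+1), base k * (if k ≤ j then (1:ℝ) else -1)
            = -(∑ k ∈ Finset.range (n+1), base k - ∑ k ∈ Finset.range (j+1), base k) := by
          rw [← Finset.sum_Ico_eq_sub _ (by omega), ← Finset.sum_neg_distrib]
          apply Finset.sum_congr rfl
          intro k hk
          rw [Finset.mem_Ico] at hk
          rw [if_neg (by omega)]
          ring
        rw [Finset.range_eq_Ico, ← esplit, e1, e2, hT (j+1), hT (n+1), hCdef]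
        ring
      · rw [hwS j]
        by_cases hjn : j = n
        · have hx1 : R ≤ x := by rw [hjn, hsgridn] at hPj; exact hPj
          have h1 := hRp x hx1
          have h2 := hRp R le_rfl
          rw [hjn, hsgridn]
          have h3 : ρ x - ρ R = (ρ x - Lp) - (ρ R - Lp) := by ring
          calc |ρ x - ρ R| = |(ρ x - Lp) - (ρ R - Lp)| := by rw [← h3]
          _ ≤ |ρ x - Lp| + |ρ R - Lp| := abs_sub _ _
          _ ≤ 2*ε₀ := by linarith
        · have hj1n : j+1 ≤ n := by omega
          have hx2 : x < sgrid (j+1) := hgt (j+1) (by omega) hj1n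
          have hdist : dist x (sgrid j) < δ := by
            rw [Real.dist_eq, abs_of_nonneg (by linarith)]
            have h4 := hsgrid_succ j
            linarith [hhδ, hδpos]
          have hxmem : x ∈ Set.Icc (-R) R := by
            constructor
            · rw [← hsgrid0]; exact hcase
            · have h5 := (hsgrid_mem (j+1) hj1n).2; linarith
          have h5 := hδ x hxmem (sgrid j) (hsgrid_mem j hjle) hdist
          rw [Real.dist_eq] at h5
          linarith [h5.le]
      · intro k hk hk1 hk2
        by_cases hkj : k ≤ j
        · have hkj' : k < j := by omega
          show |Real.tanh (α*(x - sgrid k)) - (if k ≤ j then (1:ℝ) else -1)| ≤ 1/((n:ℝ)+1)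
          rw [if_pos hkj]
          apply hfar_hi
          have h6 := hsgrid_step k j hkj'
          have h7 : h ≤ x - sgrid k := by linarith
          exact mul_le_mul_of_nonneg_left h7 hαpos.le
        · show |Real.tanh (α*(x - sgrid k)) - (if k ≤ j then (1:ℝ) else -1)| ≤ 1/((n:ℝ)+1)
          rw [if_neg hkj, sub_neg_eq_add]
          have hkj2 : j+1 < k := by omega
          apply hfar_lo
          have hj1n : j+1 ≤ n := by omega
          have hx2 : x < sgrid (j+1) := hgt (j+1) (by omega) hj1n
          have h8 := hsgrid_step (j+1) k hkj2
          have h9 : x - sgrid k ≤ -h := by linarith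
          calc α*(x - sgrid k) ≤ α*(-h) := mul_le_mul_of_nonneg_left h9 hαpos.le
          _ = -(α*h) := by ring
end
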